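/- arXiv:2409.18153 — 7 statements merged into one kernel-verified Lean document; each statement's English description precedes it below -/
import Mathlib

section
/- Assume h_{11} > h_{nn}. Then there exists p ∈ ℝ with p ≠ −1 such that 0 < A_{-{1}} < A_{-{n}} (so greedy selection by individual effects, LAGS, prefers copies of sample n) while A_{-{1}^c} > A_{-{n}^c}, i.e., removing all c copies of sample 1 changes the prediction at x_test strictly more than removing all c copies of sample n. Hence LAGS fails to solve c-MISS due to amplification. -/
open Matrix Finset

noncomputable section

/-- Gram matrix `XᵀX` of a design in which the row `xᵢ` appears with multiplicity `w i`. -/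
def gramW {n d : ℕ} (X : Matrix (Fin n) (Fin d) ℝ) (w : Fin n → ℕ) :
    Matrix (Fin d) (Fin d) ℝ :=
  ∑ i, (w i : ℝ) • vecMulVec (X i) (X i)

/-- OLS estimator for a design in which the row `xᵢ` (with label `y i`) appears with
multiplicity `w i`. -/
def olsW {n d : ℕ} (X : Matrix (Fin n) (Fin d) ℝ) (y : Fin n → ℝ) (w : Fin n → ℕ) :
    Fin d → ℝ :=
  (gramW X w)⁻¹ *ᵥ (∑ i, (w i : ℝ) • (y i • X i))

/-- (Cross-)leverage score `hᵢⱼ = xᵢᵀ N⁻¹ xⱼ` in the multiplicity-`w` design. -/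
def levW {n d : ℕ} (X : Matrix (Fin n) (Fin d) ℝ) (w : Fin n → ℕ) (i j : Fin n) : ℝ :=
  X i ⬝ᵥ ((gramW X w)⁻¹ *ᵥ X j)

/-- The generated labels: each copy of sample 1 has label `x₁ᵀθ* - ε`, each copy of
sample n has label `xₙᵀθ* - pε`, and sample i (middle) has label `xᵢᵀθ*`. -/
def ygen {n d : ℕ} (X : Matrix (Fin n) (Fin d) ℝ) (θstar : Fin d → ℝ) (ε p : ℝ)
    (i₁ iₙ : Fin n) : Fin n → ℝ :=
  fun i => X i ⬝ᵥ θstar - (if i = i₁ then ε else if i = iₙ then p * ε else 0)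

/-- The test point `x_test = (x₁ + p xₙ)/(p+1)`. -/
def xtest {n d : ℕ} (X : Matrix (Fin n) (Fin d) ℝ) (p : ℝ) (i₁ iₙ : Fin n) :
    Fin d → ℝ :=
  fun j => (X i₁ j + p * X iₙ j) / (p + 1)

/-- Actual effect `A₋ₛ = x_testᵀ(θ̂₋ₛ - θ̂)` of passing from the multiplicity-`w`
design to the multiplicity-`w'` design (removing some copies). -/
def AeffW {n d : ℕ} (X : Matrix (Fin n) (Fin d) ℝ) (θstar : Fin d → ℝ) (ε p : ℝ)
    (i₁ iₙ : Fin n) (w w' : Fin n → ℕ) : ℝ :=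
  xtest X p i₁ iₙ ⬝ᵥ (olsW X (ygen X θstar ε p i₁ iₙ) w' - olsW X (ygen X θstar ε p i₁ iₙ) w)

/-!
By Sherman–Morrison, removing `t` copies of sample `j` moves the prediction at `x_test` by
`t ε / (p + 1) · U / (1 - t h₁₁)` for `j = 1` and by `t ε / (p + 1) · V / (1 - t hₙₙ)` for
`j = n`, where `U = (h₁₁ + p h₁ₙ)(1 - c h₁₁ - c p h₁ₙ)` and `V = (h₁ₙ + p hₙₙ)(p - c h₁ₙ - c p hₙₙ)`.
Positive definiteness of the Gram matrix of the middle samples, tested on the span of `N⁻¹x₁` and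
`N⁻¹xₙ`, makes both the leverage matrix `H = (hᵢⱼ)_{i,j ∈ {1,n}}` and `1 - c H` positive definite.
As `c > 1` and `h₁₁ > hₙₙ`, `(1 - hₙₙ) / (1 - h₁₁) < (1 - c hₙₙ) / (1 - c h₁₁)`, and it suffices to
find `p > 0` with `U > 0` and `V / U` strictly between these two ratios. The intermediate value
theorem provides it: for such a ratio `r`, `V - r U < 0` at `p = 0`, while `V - r U > 0` where `U`
first vanishes (for large `p` if `h₁ₙ = 0`).
-/

section Gram

variable {n d : ℕ} (X : Matrix (Fin n) (Fin d) ℝ)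

lemma vecMulVec_self_mulVec {m R : Type*} [Fintype m] [CommSemiring R] (x u : m → R) :
    vecMulVec x x *ᵥ u = (x ⬝ᵥ u) • x := by
  rw [vecMulVec_mulVec, op_smul_eq_smul]

lemma sum_vecMulVec_mulVec (s : Finset (Fin n)) (u : Fin d → ℝ) :
    (∑ i ∈ s, vecMulVec (X i) (X i)) *ᵥ u = ∑ i ∈ s, (X i ⬝ᵥ u) • X i := by
  simp only [sum_mulVec, vecMulVec_self_mulVec]

lemma gramW_mulVec (w : Fin n → ℕ) (u : Fin d → ℝ) :
    gramW X w *ᵥ u = ∑ i, ((w i : ℝ) * (X i ⬝ᵥ u)) • X i := by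
  simp only [gramW, sum_mulVec, smul_mulVec, vecMulVec_self_mulVec, smul_smul]

lemma dotProduct_gramW_mulVec (w : Fin n → ℕ) (u : Fin d → ℝ) :
    u ⬝ᵥ (gramW X w *ᵥ u) = ∑ i, (w i : ℝ) * (X i ⬝ᵥ u) ^ 2 := by
  rw [gramW_mulVec, dotProduct_sum]
  exact Finset.sum_congr rfl fun i _ => by rw [dotProduct_smul, smul_eq_mul, dotProduct_comm]; ring

lemma sum_sq_dotProduct_pos {s : Finset (Fin n)}
    (hS : IsUnit (∑ i ∈ s, vecMulVec (X i) (X i)).det) {u : Fin d → ℝ} (hu : u ≠ 0) :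
    0 < ∑ i ∈ s, (X i ⬝ᵥ u) ^ 2 := by
  refine (Finset.sum_nonneg fun i _ => sq_nonneg _).lt_of_ne fun h => hu ?_
  have hzero : ∀ i ∈ s, X i ⬝ᵥ u = 0 := fun i hi =>
    pow_eq_zero_iff two_ne_zero |>.1 <|
      (Finset.sum_eq_zero_iff_of_nonneg fun i _ => sq_nonneg _).1 h.symm i hi
  refine mulVec_injective_iff_isUnit.2 ((isUnit_iff_isUnit_det _).2 hS) ?_
  rw [sum_vecMulVec_mulVec, Finset.sum_eq_zero fun i hi => by rw [hzero i hi, zero_smul],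
    mulVec_zero]

lemma isUnit_det_gramW {s : Finset (Fin n)} (hS : IsUnit (∑ i ∈ s, vecMulVec (X i) (X i)).det)
    {w : Fin n → ℕ} (hw : ∀ i ∈ s, 1 ≤ w i) : IsUnit (gramW X w).det := by
  refine (isUnit_iff_isUnit_det _).1 <| mulVec_injective_iff_isUnit.1 fun u v huv => ?_
  rw [← sub_eq_zero] at huv ⊢
  rw [← mulVec_sub] at huv
  by_contra hne
  have hlt := sum_sq_dotProduct_pos X hS hne
  have hle : ∑ i ∈ s, (X i ⬝ᵥ (u - v)) ^ 2 ≤ ∑ i, (w i : ℝ) * (X i ⬝ᵥ (u - v)) ^ 2 :=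
    calc ∑ i ∈ s, (X i ⬝ᵥ (u - v)) ^ 2 ≤ ∑ i ∈ s, (w i : ℝ) * (X i ⬝ᵥ (u - v)) ^ 2 :=
          Finset.sum_le_sum fun i hi =>
            le_mul_of_one_le_left (sq_nonneg _) (by exact_mod_cast hw i hi)
      _ ≤ _ := Finset.sum_le_sum_of_subset_of_nonneg (Finset.subset_univ s)
          fun i _ _ => by positivity
  rw [← dotProduct_gramW_mulVec, huv, dotProduct_zero] at hle
  linarith

lemma isUnit_det_gramW_update {s : Finset (Fin n)}
    (hS : IsUnit (∑ i ∈ s, vecMulVec (X i) (X i)).det) {w : Fin n → ℕ} (hw : ∀ i ∈ s, 1 ≤ w i)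
    {j : Fin n} (hj : j ∉ s) (k : ℕ) : IsUnit (gramW X (Function.update w j k)).det :=
  isUnit_det_gramW X hS fun i hi => by
    rw [Function.update_of_ne (ne_of_mem_of_not_mem hi hj)]
    exact hw i hi

lemma gramW_transpose (w : Fin n → ℕ) : (gramW X w)ᵀ = gramW X w := by
  ext i j
  simp only [gramW, transpose_apply, Matrix.sum_apply, Matrix.smul_apply, vecMulVec_apply,
    mul_comm]

lemma levW_comm (w : Fin n → ℕ) (i j : Fin n) : levW X w i j = levW X w j i := by
  rw [levW, levW, dotProduct_mulVec, ← mulVec_transpose, transpose_nonsing_inv,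
    gramW_transpose, dotProduct_comm]

lemma sum_cast_update_smul {M : Type*} [AddCommGroup M] [Module ℝ M] (w : Fin n → ℕ)
    (j : Fin n) (k : ℕ) (f : Fin n → M) :
    ∑ i, ((Function.update w j k i : ℕ) : ℝ) • f i
      = ∑ i, (w i : ℝ) • f i + ((k : ℝ) - w j) • f j := by
  have h : ∀ i, ((Function.update w j k i : ℕ) : ℝ) • f i
      = (w i : ℝ) • f i + if i = j then ((k : ℝ) - w j) • f j else 0 := by
    intro i
    rcases eq_or_ne i j with rfl | hij
    · rw [if_pos rfl, Function.update_self, sub_smul, add_sub_cancel]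
    · rw [Function.update_of_ne hij, if_neg hij, add_zero]
  rw [Finset.sum_congr rfl fun i _ => h i, Finset.sum_add_distrib, Finset.sum_ite_eq']
  simp

lemma gramW_update_mulVec (w : Fin n → ℕ) (j : Fin n) (k : ℕ) (u : Fin d → ℝ) :
    gramW X (Function.update w j k) *ᵥ u
      = gramW X w *ᵥ u - (((w j : ℝ) - k) * (X j ⬝ᵥ u)) • X j := by
  simp only [gramW, sum_mulVec, smul_mulVec, vecMulVec_self_mulVec]
  rw [sum_cast_update_smul]
  module

lemma gramW_mulVec_olsW (y : Fin n → ℝ) {w : Fin n → ℕ} (hN : IsUnit (gramW X w).det) :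
    gramW X w *ᵥ olsW X y w = ∑ i, (w i : ℝ) • (y i • X i) := by
  rw [olsW, mulVec_mulVec, mul_nonsing_inv _ hN, one_mulVec]

lemma gramW_mulVec_inv_mulVec {w : Fin n → ℕ} (hN : IsUnit (gramW X w).det) (j : Fin n) :
    gramW X w *ᵥ ((gramW X w)⁻¹ *ᵥ X j) = X j := by
  rw [mulVec_mulVec, mul_nonsing_inv _ hN, one_mulVec]

/-- Sherman–Morrison. -/
lemma olsW_update_sub (y : Fin n → ℝ) {w : Fin n → ℕ} {j : Fin n} {k : ℕ}
    (hN : IsUnit (gramW X w).det) (hN' : IsUnit (gramW X (Function.update w j k)).det)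
    (hden : 1 - ((w j : ℝ) - k) * levW X w j j ≠ 0) :
    olsW X y (Function.update w j k) - olsW X y w
      = (((w j : ℝ) - k) * (X j ⬝ᵥ olsW X y w - y j) / (1 - ((w j : ℝ) - k) * levW X w j j))
          • ((gramW X w)⁻¹ *ᵥ X j) := by
  set t : ℝ := (w j : ℝ) - k
  set μ := t * (X j ⬝ᵥ olsW X y w - y j) / (1 - t * levW X w j j)
  refine mulVec_injective_iff_isUnit.2 ((isUnit_iff_isUnit_det _).2 hN') ?_
  have hlhs : gramW X (Function.update w j k) *ᵥ (olsW X y (Function.update w j k) - olsW X y w)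
      = (t * (X j ⬝ᵥ olsW X y w - y j)) • X j := by
    rw [mulVec_sub, gramW_mulVec_olsW X y hN', gramW_update_mulVec,
      gramW_mulVec_olsW X y hN, sum_cast_update_smul]
    module
  have hrhs : gramW X (Function.update w j k) *ᵥ (μ • ((gramW X w)⁻¹ *ᵥ X j))
      = (μ * (1 - t * levW X w j j)) • X j := by
    rw [mulVec_smul, gramW_update_mulVec, gramW_mulVec_inv_mulVec X hN]
    change μ • (X j - (t * levW X w j j) • X j) = _
    module
  rw [hlhs, hrhs, div_mul_cancel₀ _ hden]

end Gram

section Effects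

variable {n d : ℕ} (X : Matrix (Fin n) (Fin d) ℝ) (θstar : Fin d → ℝ) (ε p : ℝ) {i₁ iₙ : Fin n}
  {w : Fin n → ℕ}

lemma olsW_ygen (hne : i₁ ≠ iₙ) (hN : IsUnit (gramW X w).det) :
    olsW X (ygen X θstar ε p i₁ iₙ) w
      = θstar - ((w i₁ : ℝ) * ε) • ((gramW X w)⁻¹ *ᵥ X i₁)
          - ((w iₙ : ℝ) * (p * ε)) • ((gramW X w)⁻¹ *ᵥ X iₙ) := by
  have hperturb : ∑ i, (w i : ℝ) • ((if i = i₁ then ε else if i = iₙ then p * ε else 0) • X i)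
      = ((w i₁ : ℝ) * ε) • X i₁ + ((w iₙ : ℝ) * (p * ε)) • X iₙ := by
    rw [← Finset.sum_subset (Finset.subset_univ {i₁, iₙ}) fun i _ hi => by
      simp only [Finset.mem_insert, Finset.mem_singleton, not_or] at hi
      rw [if_neg hi.1, if_neg hi.2, zero_smul, smul_zero]]
    rw [Finset.sum_pair hne, if_pos rfl, if_neg hne.symm, if_pos rfl, smul_smul, smul_smul]
  have hmoment : ∑ i, (w i : ℝ) • (ygen X θstar ε p i₁ iₙ i • X i)
      = gramW X w *ᵥ θstar - (((w i₁ : ℝ) * ε) • X i₁ + ((w iₙ : ℝ) * (p * ε)) • X iₙ) := by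
    rw [← hperturb, gramW_mulVec, ← Finset.sum_sub_distrib]
    refine Finset.sum_congr rfl fun i _ => ?_
    rw [ygen, sub_smul, smul_sub, smul_smul, dotProduct_comm]
  rw [olsW, hmoment, mulVec_sub, mulVec_mulVec, nonsing_inv_mul _ hN, one_mulVec, mulVec_add,
    mulVec_smul, mulVec_smul, sub_sub]

lemma residual_ygen_first (hne : i₁ ≠ iₙ) (hN : IsUnit (gramW X w).det) :
    X i₁ ⬝ᵥ olsW X (ygen X θstar ε p i₁ iₙ) w - ygen X θstar ε p i₁ iₙ i₁
      = ε * (1 - w i₁ * levW X w i₁ i₁ - w iₙ * p * levW X w i₁ iₙ) := by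
  rw [olsW_ygen X θstar ε p hne hN]
  simp only [ygen, if_pos, dotProduct_sub, dotProduct_smul, smul_eq_mul]
  rw [← levW, ← levW]
  ring

lemma residual_ygen_last (hne : i₁ ≠ iₙ) (hN : IsUnit (gramW X w).det) :
    X iₙ ⬝ᵥ olsW X (ygen X θstar ε p i₁ iₙ) w - ygen X θstar ε p i₁ iₙ iₙ
      = ε * (p - w i₁ * levW X w i₁ iₙ - w iₙ * p * levW X w iₙ iₙ) := by
  rw [olsW_ygen X θstar ε p hne hN]
  simp only [ygen, if_neg hne.symm, if_pos, dotProduct_sub, dotProduct_smul, smul_eq_mul]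
  rw [← levW, ← levW, levW_comm X w iₙ i₁]
  ring

lemma xtest_dotProduct_inv_mulVec (j : Fin n) :
    xtest X p i₁ iₙ ⬝ᵥ ((gramW X w)⁻¹ *ᵥ X j)
      = (levW X w i₁ j + p * levW X w iₙ j) / (p + 1) := by
  simp only [xtest, levW, dotProduct, Finset.mul_sum, ← Finset.sum_add_distrib, Finset.sum_div]
  exact Finset.sum_congr rfl fun _ _ => by ring

lemma AeffW_update {j : Fin n} {k : ℕ} {t : ℝ} (ht : (w j : ℝ) - k = t)
    (hN : IsUnit (gramW X w).det) (hN' : IsUnit (gramW X (Function.update w j k)).det)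
    (hden : 1 - t * levW X w j j ≠ 0) :
    AeffW X θstar ε p i₁ iₙ w (Function.update w j k)
      = t * (levW X w i₁ j + p * levW X w iₙ j) / (p + 1)
          * ((X j ⬝ᵥ olsW X (ygen X θstar ε p i₁ iₙ) w - ygen X θstar ε p i₁ iₙ j)
              / (1 - t * levW X w j j)) := by
  subst ht
  rw [AeffW, olsW_update_sub X _ hN hN' hden, dotProduct_smul, xtest_dotProduct_inv_mulVec,
    smul_eq_mul]
  ring

lemma AeffW_update_first (hne : i₁ ≠ iₙ) {k : ℕ} {t : ℝ} (ht : (w i₁ : ℝ) - k = t)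
    (hN : IsUnit (gramW X w).det) (hN' : IsUnit (gramW X (Function.update w i₁ k)).det)
    (hden : 1 - t * levW X w i₁ i₁ ≠ 0) :
    AeffW X θstar ε p i₁ iₙ w (Function.update w i₁ k)
      = t * ε / (p + 1) * ((levW X w i₁ i₁ + p * levW X w i₁ iₙ)
          * (1 - w i₁ * levW X w i₁ i₁ - w iₙ * p * levW X w i₁ iₙ)
          / (1 - t * levW X w i₁ i₁)) := by
  rw [AeffW_update X θstar ε p ht hN hN' hden, residual_ygen_first X θstar ε p hne hN,
    levW_comm X w iₙ i₁]
  ring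

lemma AeffW_update_last (hne : i₁ ≠ iₙ) {k : ℕ} {t : ℝ} (ht : (w iₙ : ℝ) - k = t)
    (hN : IsUnit (gramW X w).det) (hN' : IsUnit (gramW X (Function.update w iₙ k)).det)
    (hden : 1 - t * levW X w iₙ iₙ ≠ 0) :
    AeffW X θstar ε p i₁ iₙ w (Function.update w iₙ k)
      = t * ε / (p + 1) * ((levW X w i₁ iₙ + p * levW X w iₙ iₙ)
          * (p - w i₁ * levW X w i₁ iₙ - w iₙ * p * levW X w iₙ iₙ)
          / (1 - t * levW X w iₙ iₙ)) := by
  rw [AeffW_update X θstar ε p ht hN hN' hden, residual_ygen_last X θstar ε p hne hN]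
  ring

end Effects

lemma linearIndependent_pair_of_apply_eq_one {ι : Type*} {u v : ι → ℝ} {k : ι} (hu : u k = 1)
    (hv : v k = 1) (huv : u ≠ v) : LinearIndependent ℝ ![u, v] := by
  rw [LinearIndependent.pair_iff]
  intro s t h
  have hst : s + t = 0 := by simpa [hu, hv] using congrFun h k
  obtain rfl : t = -s := by linarith
  have hs : s • (u - v) = 0 := by rw [← h]; module
  obtain rfl : s = 0 := (smul_eq_zero.1 hs).resolve_right (sub_ne_zero.2 huv)
  exact ⟨rfl, neg_zero⟩

/-- The Gram matrix of the middle samples, tested on `s • N⁻¹x₁ + t • N⁻¹xₙ`. -/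
lemma leverage_form_pos {n d : ℕ} (X : Matrix (Fin n) (Fin d) ℝ) {w : Fin n → ℕ}
    {i₁ iₙ : Fin n} (hne : i₁ ≠ iₙ) (hind : LinearIndependent ℝ ![X i₁, X iₙ])
    (hoff : ∀ i ∈ ({i₁, iₙ} : Finset (Fin n))ᶜ, w i = 1) (hN : IsUnit (gramW X w).det)
    (hmid : IsUnit (∑ i ∈ ({i₁, iₙ} : Finset (Fin n))ᶜ, vecMulVec (X i) (X i)).det)
    {s t : ℝ} (hst : s ≠ 0 ∨ t ≠ 0) :
    0 < s ^ 2 * levW X w i₁ i₁ + 2 * s * t * levW X w i₁ iₙ + t ^ 2 * levW X w iₙ iₙ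
      - w i₁ * (s * levW X w i₁ i₁ + t * levW X w i₁ iₙ) ^ 2
      - w iₙ * (s * levW X w i₁ iₙ + t * levW X w iₙ iₙ) ^ 2 := by
  set u := s • ((gramW X w)⁻¹ *ᵥ X i₁) + t • ((gramW X w)⁻¹ *ᵥ X iₙ)
  have hNu : gramW X w *ᵥ u = s • X i₁ + t • X iₙ := by
    rw [mulVec_add, mulVec_smul, mulVec_smul, gramW_mulVec_inv_mulVec X hN,
      gramW_mulVec_inv_mulVec X hN]
  have hu : u ≠ 0 := fun h => by
    rw [h, mulVec_zero] at hNu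
    obtain ⟨rfl, rfl⟩ := LinearIndependent.pair_iff.1 hind s t hNu.symm
    simp at hst
  have h₁ : X i₁ ⬝ᵥ u = s * levW X w i₁ i₁ + t * levW X w i₁ iₙ := by
    simp only [u, dotProduct_add, dotProduct_smul, smul_eq_mul, levW]
  have hₙ : X iₙ ⬝ᵥ u = s * levW X w i₁ iₙ + t * levW X w iₙ iₙ := by
    rw [levW_comm X w i₁ iₙ]
    simp only [u, dotProduct_add, dotProduct_smul, smul_eq_mul, levW]
  have hsplit : ∑ i ∈ ({i₁, iₙ} : Finset (Fin n))ᶜ, (X i ⬝ᵥ u) ^ 2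
      = u ⬝ᵥ (gramW X w *ᵥ u) - w i₁ * (X i₁ ⬝ᵥ u) ^ 2 - w iₙ * (X iₙ ⬝ᵥ u) ^ 2 := by
    have hmiddle : ∑ i ∈ ({i₁, iₙ} : Finset (Fin n))ᶜ, (w i : ℝ) * (X i ⬝ᵥ u) ^ 2
        = ∑ i ∈ ({i₁, iₙ} : Finset (Fin n))ᶜ, (X i ⬝ᵥ u) ^ 2 :=
      Finset.sum_congr rfl fun i hi => by rw [hoff i hi, Nat.cast_one, one_mul]
    rw [dotProduct_gramW_mulVec, ← Finset.sum_add_sum_compl {i₁, iₙ}, Finset.sum_pair hne,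
      hmiddle]
    ring
  have hquad : u ⬝ᵥ (gramW X w *ᵥ u) = s * (X i₁ ⬝ᵥ u) + t * (X iₙ ⬝ᵥ u) := by
    rw [hNu, dotProduct_add, dotProduct_smul, dotProduct_smul, smul_eq_mul, smul_eq_mul,
      dotProduct_comm u, dotProduct_comm u]
  have hpos := sum_sq_dotProduct_pos X hmid hu
  rw [hsplit, hquad, h₁, hₙ] at hpos
  linear_combination hpos

/-- With `H = !![a, g; g, b]`, the hypothesis says that `H - C • H ^ 2` is positive definite;
hence so are `H` and `1 - C • H`. -/
lemma leverage_bounds {C a b g : ℝ} (hC : 0 < C)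
    (hQ : ∀ s t : ℝ, (s ≠ 0 ∨ t ≠ 0) →
      0 < s ^ 2 * a + 2 * s * t * g + t ^ 2 * b - C * (s * a + t * g) ^ 2
        - C * (s * g + t * b) ^ 2) :
    0 < a ∧ 0 < b ∧ 0 < a * b - g ^ 2 ∧ 0 < 1 - C * a ∧ 0 < 1 - C * b ∧
      0 < (1 - C * a) * (1 - C * b) - C ^ 2 * g ^ 2 := by
  have hA : 0 < a - C * a ^ 2 - C * g ^ 2 := by linarith [hQ 1 0 (.inl one_ne_zero)]
  have hB : 0 < b - C * g ^ 2 - C * b ^ 2 := by linarith [hQ 0 1 (.inr one_ne_zero)]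
  have hCg : 0 ≤ C * g ^ 2 := by positivity
  have ha : 0 < a := by nlinarith [sq_nonneg a]
  have hb : 0 < b := by nlinarith [sq_nonneg b]
  have h1a : 0 < 1 - C * a := by nlinarith
  have h1b : 0 < 1 - C * b := by nlinarith
  have hK1 : 0 < a * b - g ^ 2 := by
    have h := hQ g (-a) (.inr (neg_ne_zero.2 ha.ne'))
    have hC' : 0 ≤ C * (a * b - g ^ 2) ^ 2 := by positivity
    nlinarith
  refine ⟨ha, hb, hK1, h1a, h1b, ?_⟩
  have h := hQ (-(g - C * a * g - C * g * b)) (a - C * a ^ 2 - C * g ^ 2) (.inr hA.ne')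
  have hfactor : (-(g - C * a * g - C * g * b)) ^ 2 * a
        + 2 * (-(g - C * a * g - C * g * b)) * (a - C * a ^ 2 - C * g ^ 2) * g
        + (a - C * a ^ 2 - C * g ^ 2) ^ 2 * b
        - C * ((-(g - C * a * g - C * g * b)) * a + (a - C * a ^ 2 - C * g ^ 2) * g) ^ 2
        - C * ((-(g - C * a * g - C * g * b)) * g + (a - C * a ^ 2 - C * g ^ 2) * b) ^ 2
      = (a - C * a ^ 2 - C * g ^ 2) * (a * b - g ^ 2)
          * ((1 - C * a) * (1 - C * b) - C ^ 2 * g ^ 2) := by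
    ring
  rw [hfactor] at h
  exact pos_of_mul_pos_right h (mul_pos hA hK1).le

section Amplification

variable {C a b g : ℝ}

/-- For `g ≠ 0`, `p₁` is the first positive root of `(a + p g)(1 - C a - C p g)`. -/
lemma exists_crossing_bound (hC : 0 < C) (ha : 0 < a) (hb : 0 < b) (hK1 : 0 < a * b - g ^ 2)
    (h1a : 0 < 1 - C * a) (h1b : 0 < 1 - C * b)
    (hK2 : 0 < (1 - C * a) * (1 - C * b) - C ^ 2 * g ^ 2) {t : ℝ} (ht : 0 < t) :
    ∃ p₁, 0 < p₁ ∧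
      t * ((a + p₁ * g) * (1 - C * a - C * p₁ * g)) < (g + p₁ * b) * (p₁ - C * g - C * p₁ * b) ∧
      ∀ q ∈ Set.Ioo 0 p₁, 0 < (a + q * g) * (1 - C * a - C * q * g) := by
  rcases lt_trichotomy g 0 with hg | rfl | hg
  · have hg' : 0 < -g := neg_pos.2 hg
    have hp₁ : 0 < a / -g := div_pos ha hg'
    have hroot : a + a / -g * g = 0 := by field_simp [hg.ne]; ring
    refine ⟨a / -g, hp₁, ?_, fun q hq => ?_⟩
    · have hfirst : 0 < g + a / -g * b := by
        have : (g + a / -g * b) * -g = a * b - g ^ 2 := by field_simp [hg.ne]; ring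
        nlinarith
      rw [hroot, zero_mul, mul_zero]
      exact mul_pos hfirst (by nlinarith)
    · exact mul_pos (by nlinarith [mul_pos (sub_pos.2 hq.2) hg'])
        (by nlinarith [mul_pos (mul_pos hC hq.1) hg'])
  · have hD : 0 < b * (1 - C * b) := mul_pos hb h1b
    obtain ⟨P, hP, hgrow⟩ : ∃ P, 1 ≤ P ∧ t * (a * (1 - C * a)) < P * (b * (1 - C * b)) := by
      refine ⟨1 + t * (a * (1 - C * a)) / (b * (1 - C * b)), ?_, ?_⟩
      · have : 0 ≤ t * (a * (1 - C * a)) / (b * (1 - C * b)) := by positivity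
        linarith
      · rw [add_mul, one_mul, div_mul_cancel₀ _ hD.ne']
        linarith
    refine ⟨P, by linarith, ?_, fun q _ => by simpa using mul_pos ha h1a⟩
    nlinarith [mul_le_mul_of_nonneg_right hP (mul_pos (by linarith : 0 < P) hD).le]
  · have hp₁ : 0 < (1 - C * a) / (C * g) := by positivity
    have hroot : 1 - C * a - C * ((1 - C * a) / (C * g)) * g = 0 := by field_simp; ring
    refine ⟨(1 - C * a) / (C * g), hp₁, ?_, fun q hq => ?_⟩
    · have hsecond : C * g * ((1 - C * a) / (C * g) - C * g - C * ((1 - C * a) / (C * g)) * b)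
          = (1 - C * a) * (1 - C * b) - C ^ 2 * g ^ 2 := by field_simp; ring
      rw [hroot, mul_zero, mul_zero]
      exact mul_pos (by positivity) (pos_of_mul_pos_right (hsecond ▸ hK2) (by positivity))
    · refine mul_pos (by nlinarith [hq.1]) ?_
      nlinarith [mul_lt_mul_of_pos_left hq.2 (mul_pos hC hg)]

lemma exists_ratio_eq (hC : 0 < C) (ha : 0 < a) (hb : 0 < b) (hK1 : 0 < a * b - g ^ 2)
    (h1a : 0 < 1 - C * a) (h1b : 0 < 1 - C * b)
    (hK2 : 0 < (1 - C * a) * (1 - C * b) - C ^ 2 * g ^ 2) {t : ℝ} (ht : 0 < t) :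
    ∃ p, 0 < p ∧ 0 < (a + p * g) * (1 - C * a - C * p * g) ∧
      (g + p * b) * (p - C * g - C * p * b) = t * ((a + p * g) * (1 - C * a - C * p * g)) := by
  obtain ⟨p₁, hp₁, hcross, hpos⟩ := exists_crossing_bound hC ha hb hK1 h1a h1b hK2 ht
  have hstart : (g + 0 * b) * (0 - C * g - C * 0 * b)
      - t * ((a + 0 * g) * (1 - C * a - C * 0 * g)) < 0 := by
    nlinarith [mul_pos ht (mul_pos ha h1a), mul_nonneg hC.le (sq_nonneg g)]
  obtain ⟨p, hp, hroot⟩ := intermediate_value_Ioo hp₁.le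
    (f := fun p => (g + p * b) * (p - C * g - C * p * b)
      - t * ((a + p * g) * (1 - C * a - C * p * g))) (by fun_prop)
    ⟨hstart, sub_pos.2 hcross⟩
  exact ⟨p, hp.1, hpos p hp, sub_eq_zero.1 hroot⟩

lemma exists_amplifying_p (hC : 1 < C) (ha : 0 < a) (hb : 0 < b) (hK1 : 0 < a * b - g ^ 2)
    (h1a : 0 < 1 - C * a) (h1b : 0 < 1 - C * b)
    (hK2 : 0 < (1 - C * a) * (1 - C * b) - C ^ 2 * g ^ 2) (hba : b < a) :
    ∃ p, 0 < p ∧ 0 < (a + p * g) * (1 - C * a - C * p * g) ∧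
      (a + p * g) * (1 - C * a - C * p * g) / (1 - a)
        < (g + p * b) * (p - C * g - C * p * b) / (1 - b) ∧
      (g + p * b) * (p - C * g - C * p * b) / (1 - C * b)
        < (a + p * g) * (1 - C * a - C * p * g) / (1 - C * a) := by
  have h1a' : 0 < 1 - a := by nlinarith
  have h1b' : 0 < 1 - b := by nlinarith
  -- any ratio `V / U = t` strictly between these two makes both inequalities hold
  have hratios : (1 - b) / (1 - a) < (1 - C * b) / (1 - C * a) := by
    rw [div_lt_div_iff₀ h1a' h1a]
    nlinarith
  obtain ⟨t, hlow, hhigh⟩ := exists_between hratios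
  have ht : 0 < t := lt_trans (by positivity) hlow
  obtain ⟨p, hp, hU, hV⟩ := exists_ratio_eq (by linarith) ha hb hK1 h1a h1b hK2 ht
  refine ⟨p, hp, hU, ?_, ?_⟩ <;> rw [hV] <;>
    generalize (a + p * g) * (1 - C * a - C * p * g) = U at hU ⊢
  · rw [div_lt_iff₀ h1a'] at hlow
    rw [div_lt_div_iff₀ h1a' h1b']
    nlinarith [mul_lt_mul_of_pos_left hlow hU]
  · rw [lt_div_iff₀ h1a] at hhigh
    rw [div_lt_div_iff₀ h1b h1a]
    nlinarith [mul_lt_mul_of_pos_left hhigh hU]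

end Amplification

theorem lags_fails_c_miss_amplification_general
    (n d c : ℕ) (hc : 2 ≤ c) (hd : 0 < d)
    (X : Matrix (Fin n) (Fin d) ℝ) (θstar : Fin d → ℝ) (ε : ℝ) (hε : 0 < ε)
    (i₁ iₙ : Fin n)
    (hone : ∀ i, X i ⟨0, hd⟩ = 1)
    -- the multiplicity function: `c` copies of samples 1 and n, one copy of the others
    (w : Fin n → ℕ) (hw : w = fun i => if i = i₁ ∨ i = iₙ then c else 1)
    (hmid : IsUnit (∑ i ∈ ({i₁, iₙ} : Finset (Fin n))ᶜ, vecMulVec (X i) (X i)).det)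
    (hlev : levW X w iₙ iₙ < levW X w i₁ i₁) :
    ∃ p : ℝ, p ≠ -1 ∧
      0 < AeffW X θstar ε p i₁ iₙ w (Function.update w i₁ (c - 1)) ∧
      AeffW X θstar ε p i₁ iₙ w (Function.update w i₁ (c - 1)) <
        AeffW X θstar ε p i₁ iₙ w (Function.update w iₙ (c - 1)) ∧
      AeffW X θstar ε p i₁ iₙ w (Function.update w iₙ 0) <
        AeffW X θstar ε p i₁ iₙ w (Function.update w i₁ 0) := by
  have hne : i₁ ≠ iₙ := by rintro rfl; exact hlev.false
  have hwT : ∀ j ∈ ({i₁, iₙ} : Finset (Fin n)), w j = c := by simp [hw]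
  have hoff : ∀ i ∈ ({i₁, iₙ} : Finset (Fin n))ᶜ, w i = 1 := fun i hi => by simp_all
  have hN : IsUnit (gramW X w).det := isUnit_det_gramW X hmid fun i hi => (hoff i hi).ge
  have hN' (j : Fin n) (hj : j ∈ ({i₁, iₙ} : Finset (Fin n))) (k : ℕ) :=
    isUnit_det_gramW_update X hmid (fun i hi => (hoff i hi).ge) (Finset.notMem_compl.2 hj) k
  have hind := linearIndependent_pair_of_apply_eq_one (hone i₁) (hone iₙ)
    fun h => hlev.ne (by rw [levW, levW, h])
  obtain ⟨ha, hb, hK1, h1a, h1b, hK2⟩ := leverage_bounds (C := c) (by positivity)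
    fun s t hst => by simpa [hwT] using leverage_form_pos X hne hind hoff hN hmid hst
  have hC : (1 : ℝ) < c := by exact_mod_cast hc
  have h1a' : 0 < 1 - levW X w i₁ i₁ := by nlinarith
  have h1b' : 0 < 1 - levW X w iₙ iₙ := by nlinarith
  obtain ⟨p, hp, hU, hUV, hVU⟩ := exists_amplifying_p hC ha hb hK1 h1a h1b hK2 hlev
  have hdropOne : ∀ j ∈ ({i₁, iₙ} : Finset (Fin n)), (w j : ℝ) - (c - 1 : ℕ) = 1 :=
    fun j hj => by rw [hwT j hj, Nat.cast_sub (by omega)]; ring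
  have hdropAll : ∀ j ∈ ({i₁, iₙ} : Finset (Fin n)), (w j : ℝ) - (0 : ℕ) = c :=
    fun j hj => by simp [hwT j hj]
  have e₁ := AeffW_update_first X θstar ε p hne (hdropOne _ (by simp)) hN (hN' _ (by simp) _)
    (by linarith)
  have eₙ := AeffW_update_last X θstar ε p hne (hdropOne _ (by simp)) hN (hN' _ (by simp) _)
    (by linarith)
  have e₁c := AeffW_update_first X θstar ε p hne (hdropAll _ (by simp)) hN (hN' _ (by simp) _)
    h1a.ne'
  have eₙc := AeffW_update_last X θstar ε p hne (hdropAll _ (by simp)) hN (hN' _ (by simp) _)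
    h1b.ne'
  simp only [hwT, Finset.mem_insert, Finset.mem_singleton, true_or, or_true, one_mul]
    at e₁ eₙ e₁c eₙc
  have hε' : 0 < ε / (p + 1) := by positivity
  refine ⟨p, by linarith, ?_, ?_, ?_⟩
  · rw [e₁]
    exact mul_pos hε' (div_pos hU h1a')
  · rw [e₁, eₙ]
    exact mul_lt_mul_of_pos_left hUV hε'
  · rw [e₁c, eₙc]
    exact mul_lt_mul_of_pos_left hVU (by positivity)

/-- Theorem 3.5, failure of LAGS in c-MISS by amplification:
with `c ≥ 2` copies of `x₁` and of `xₙ` in the design and `h₁₁ > hₙₙ`, there is some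
`p ≠ -1` such that `0 < A₋{1} < A₋{n}` (so greedy selection by individual effects
prefers copies of sample n) yet `A₋{1}ᶜ > A₋{n}ᶜ`. -/
theorem lags_fails_c_miss_amplification
    (n d c : ℕ) (hc : 2 ≤ c) (hn : 3 ≤ n) (hd : 0 < d)
    (X : Matrix (Fin n) (Fin d) ℝ) (θstar : Fin d → ℝ) (ε : ℝ) (hε : 0 < ε)
    (i₁ iₙ : Fin n) (hi₁ : (i₁ : ℕ) = 0) (hiₙ : (iₙ : ℕ) = n - 1)
    (hone : ∀ i, X i ⟨0, hd⟩ = 1)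
    -- the multiplicity function: `c` copies of samples 1 and n, one copy of the others
    (w : Fin n → ℕ) (hw : w = fun i => if i = i₁ ∨ i = iₙ then c else 1)
    (hN : IsUnit (gramW X w).det)
    (hmid : IsUnit (∑ i ∈ ({i₁, iₙ} : Finset (Fin n))ᶜ, vecMulVec (X i) (X i)).det)
    (hout₁ : IsUnit (gramW X (Function.update w i₁ (c - 1))).det)
    (houtₙ : IsUnit (gramW X (Function.update w iₙ (c - 1))).det)
    (hout₁c : IsUnit (gramW X (Function.update w i₁ 0)).det)
    (houtₙc : IsUnit (gramW X (Function.update w iₙ 0)).det)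
    (hlev : levW X w iₙ iₙ < levW X w i₁ i₁) :
    ∃ p : ℝ, p ≠ -1 ∧
      0 < AeffW X θstar ε p i₁ iₙ w (Function.update w i₁ (c - 1)) ∧
      AeffW X θstar ε p i₁ iₙ w (Function.update w i₁ (c - 1)) <
        AeffW X θstar ε p i₁ iₙ w (Function.update w iₙ (c - 1)) ∧
      AeffW X θstar ε p i₁ iₙ w (Function.update w iₙ 0) <
        AeffW X θstar ε p i₁ iₙ w (Function.update w i₁ 0) :=
  lags_fails_c_miss_amplification_general n d c hc hd X θstar ε hε i₁ iₙ hone w hw hmid hlev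
end
end

section
/- Suppose A_{-{1}} > 0, A_{-{n}} > 0, A_{-{1,n}} < A_{-{n}} (cancellation), and that some subset S* with |S*| ≤ 2 maximizing A_{-S} over all S with |S| ≤ 2 contains the index n. Then the adaptive greedy algorithm solves 2-MISS, in the following precise sense: (a) if A′_{-{i}} < 0 for all 1 ≤ i ≤ n−1, then the singleton {n} maximizes A_{-S} over all S ⊆ {1,…,n} with |S| ≤ 2; (b) if i* ∈ {1,…,n−1} maximizes A′_{-{i}} over 1 ≤ i ≤ n−1 and A′_{-{i*}} > 0, then the pair {i*, n} maximizes A_{-S} over all S ⊆ {1,…,n} with |S| ≤ 2. -/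
open Matrix Finset

noncomputable section

/-- The Gram matrix `X₋ₛᵀ X₋ₛ` of the rows of `X` outside `S`. -/
def gramOut {n d : ℕ} (X : Matrix (Fin n) (Fin d) ℝ) (S : Finset (Fin n)) :
    Matrix (Fin d) (Fin d) ℝ :=
  ∑ i ∈ Sᶜ, vecMulVec (X i) (X i)

/-- The leave-`S`-out OLS estimator `θ̂₋ₛ = (X₋ₛᵀX₋ₛ)⁻¹ X₋ₛᵀ y₋ₛ`. -/
def olsOut {n d : ℕ} (X : Matrix (Fin n) (Fin d) ℝ) (y : Fin n → ℝ)
    (S : Finset (Fin n)) : Fin d → ℝ :=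
  (gramOut X S)⁻¹ *ᵥ (∑ i ∈ Sᶜ, y i • X i)

/-- The full OLS estimator `θ̂ = (XᵀX)⁻¹ Xᵀ y`. -/
def ols {n d : ℕ} (X : Matrix (Fin n) (Fin d) ℝ) (y : Fin n → ℝ) : Fin d → ℝ :=
  olsOut X y ∅

/-- The actual effect `A₋ₛ = x_testᵀ (θ̂₋ₛ - θ̂)` of removing the samples in `S`. -/
def effect {n d : ℕ} (X : Matrix (Fin n) (Fin d) ℝ) (y : Fin n → ℝ)
    (xt : Fin d → ℝ) (S : Finset (Fin n)) : ℝ :=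
  xt ⬝ᵥ (olsOut X y S - ols X y)

/-- The (cross-)leverage score `hᵢⱼ = xᵢᵀ N⁻¹ xⱼ` with `N = XᵀX`. -/
def lev {n d : ℕ} (X : Matrix (Fin n) (Fin d) ℝ) (i j : Fin n) : ℝ :=
  X i ⬝ᵥ ((Xᵀ * X)⁻¹ *ᵥ X j)

/-- The negative residual `rᵢ = xᵢᵀ θ̂ - yᵢ`. -/
def resid {n d : ℕ} (X : Matrix (Fin n) (Fin d) ℝ) (y : Fin n → ℝ) (i : Fin n) : ℝ :=
  X i ⬝ᵥ ols X y - y i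

/-- The adaptive score `A′₋{i} = x_testᵀ(θ̂′₋{i} - θ̂′)`, where `θ̂′` is fitted without
sample `iₙ` and `θ̂′₋{i}` without both `i` and `iₙ`. -/
def Aprime {n d : ℕ} (X : Matrix (Fin n) (Fin d) ℝ) (y : Fin n → ℝ)
    (xt : Fin d → ℝ) (iₙ : Fin n) (i : Fin n) : ℝ :=
  xt ⬝ᵥ (olsOut X y {i, iₙ} - olsOut X y {iₙ})

lemma effect_pair {n d : ℕ} (X : Matrix (Fin n) (Fin d) ℝ) (y : Fin n → ℝ)
    (xt : Fin d → ℝ) (iₙ i : Fin n) :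
    effect X y xt {i, iₙ} = effect X y xt {iₙ} + Aprime X y xt iₙ i := by
  unfold effect Aprime
  simp only [dotProduct_sub]
  ring

lemma pair_struct {n : ℕ} (S : Finset (Fin n)) (iₙ : Fin n) (hc : S.card ≤ 2)
    (hm : iₙ ∈ S) : ∃ i, S = {i, iₙ} := by
  interval_cases h : S.card
  · simp_all [Finset.card_eq_zero]
  · exact ⟨iₙ, by rw [Finset.card_eq_one] at h; obtain ⟨a, rfl⟩ := h; simp_all⟩
  · rw [Finset.card_eq_two] at h
    obtain ⟨a, b, hab, rfl⟩ := h
    simp only [Finset.mem_insert, Finset.mem_singleton] at hm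
    rcases hm with rfl | rfl
    · exact ⟨b, by rw [Finset.pair_comm]⟩
    · exact ⟨a, rfl⟩

/-- Theorem 4.2: under cancellation (`A₋{1} > 0`, `A₋{n} > 0`,
`A₋{1,n} < A₋{n}`), if some optimal subset of size ≤ 2 contains `n`, then the adaptive
greedy algorithm solves 2-MISS:
(a) if all adaptive scores `A′₋{i}` (for `i ≠ n`) are negative, then `{n}` maximizes
`A₋ₛ` over all `S` with `|S| ≤ 2`;
(b) if `i*` (≠ n) maximizes the adaptive score among `i ≠ n` and `A′₋{i*} > 0`, then
`{i*, n}` maximizes `A₋ₛ` over all `S` with `|S| ≤ 2`. -/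
theorem adaptive_greedy_solves_two_miss
    (n d : ℕ) (hn : 3 ≤ n) (hd : 0 < d)
    (X : Matrix (Fin n) (Fin d) ℝ) (θstar : Fin d → ℝ) (ε : ℝ) (hε : 0 < ε)
    (p : ℝ) (hp : -1 < p)
    (i₁ iₙ : Fin n) (hi₁ : (i₁ : ℕ) = 0) (hiₙ : (iₙ : ℕ) = n - 1)
    (hone : ∀ i, X i ⟨0, hd⟩ = 1)
    (hN : IsUnit (Xᵀ * X).det)
    (hmid : IsUnit (∑ i ∈ ({i₁, iₙ} : Finset (Fin n))ᶜ, vecMulVec (X i) (X i)).det)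
    (hout : ∀ S : Finset (Fin n), S.card ≤ 2 → IsUnit (gramOut X S).det)
    (hnn : lev X iₙ iₙ < 1)
    (hs : ∀ i, i ≠ iₙ → 0 < (1 - lev X i i) * (1 - lev X iₙ iₙ) - (lev X i iₙ) ^ 2)
    -- cancellation
    (hA₁ : 0 < effect X (ygen X θstar ε p i₁ iₙ) (xtest X p i₁ iₙ) {i₁})
    (hAₙ : 0 < effect X (ygen X θstar ε p i₁ iₙ) (xtest X p i₁ iₙ) {iₙ})
    (hcanc : effect X (ygen X θstar ε p i₁ iₙ) (xtest X p i₁ iₙ) {i₁, iₙ} <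
      effect X (ygen X θstar ε p i₁ iₙ) (xtest X p i₁ iₙ) {iₙ})
    -- some optimal subset of size at most 2 contains sample n
    (hopt : ∃ Sopt : Finset (Fin n), Sopt.card ≤ 2 ∧ iₙ ∈ Sopt ∧
      ∀ S : Finset (Fin n), S.card ≤ 2 →
        effect X (ygen X θstar ε p i₁ iₙ) (xtest X p i₁ iₙ) S ≤
          effect X (ygen X θstar ε p i₁ iₙ) (xtest X p i₁ iₙ) Sopt) :
    ((∀ i, i ≠ iₙ → Aprime X (ygen X θstar ε p i₁ iₙ) (xtest X p i₁ iₙ) iₙ i < 0) →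
      ∀ S : Finset (Fin n), S.card ≤ 2 →
        effect X (ygen X θstar ε p i₁ iₙ) (xtest X p i₁ iₙ) S ≤
          effect X (ygen X θstar ε p i₁ iₙ) (xtest X p i₁ iₙ) {iₙ}) ∧
    (∀ istar, istar ≠ iₙ →
      (∀ i, i ≠ iₙ → Aprime X (ygen X θstar ε p i₁ iₙ) (xtest X p i₁ iₙ) iₙ i ≤
        Aprime X (ygen X θstar ε p i₁ iₙ) (xtest X p i₁ iₙ) iₙ istar) →
      0 < Aprime X (ygen X θstar ε p i₁ iₙ) (xtest X p i₁ iₙ) iₙ istar →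
      ∀ S : Finset (Fin n), S.card ≤ 2 →
        effect X (ygen X θstar ε p i₁ iₙ) (xtest X p i₁ iₙ) S ≤
          effect X (ygen X θstar ε p i₁ iₙ) (xtest X p i₁ iₙ) {istar, iₙ}) := by

  set y := ygen X θstar ε p i₁ iₙ
  set xt := xtest X p i₁ iₙ
  obtain ⟨Sopt, hcard, hmem, hmax⟩ := hopt
  obtain ⟨j, rfl⟩ := pair_struct Sopt iₙ hcard hmem
  constructor
  · intro hneg S hS
    refine (hmax S hS).trans ?_
    rw [effect_pair]
    rcases eq_or_ne j iₙ with rfl | hj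
    · simp [Aprime]
    · linarith [hneg j hj]
  · intro istar his hmaxA hpos S hS
    refine (hmax S hS).trans ?_
    rw [effect_pair, effect_pair]
    rcases eq_or_ne j iₙ with rfl | hj
    · have hpp : ({j, j} : Finset (Fin n)) = {j} := by simp
      simp only [Aprime, hpp, sub_self, dotProduct_zero] at hpos ⊢
      linarith
    · linarith [hmaxA j hj]
end
end

section
/- For distinct indices i, j ∈ {1,…,n} such that D := (1−h_ii)(1−h_jj) − h_ij² ≠ 0 and X_{-{i,j}}ᵀX_{-{i,j}} is invertible, and for any x_test ∈ ℝ^d, the pairwise actual effect satisfies A_{-{i,j}} = x_testᵀ[(1−h_jj)N⁻¹x_i r_i + (1−h_ii)N⁻¹x_j r_j + h_ij N⁻¹(x_i r_j + x_j r_i)]/D. Equivalently, A_{-{i,j}} = [(1−h_ii)(1−h_jj)(A_{-{i}} + A_{-{j}}) + h_ij·x_testᵀN⁻¹(x_i r_j + x_j r_i)]/D, where A_{-{i}} = x_testᵀN⁻¹x_i r_i/(1−h_ii) (assuming h_ii ≠ 1 and h_jj ≠ 1). -/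
open Matrix Finset

noncomputable section

/-!
Removing samples `i` and `j` turns the Gram matrix `N = XᵀX` into the rank-two downdate
`G = N - xᵢxᵢᵀ - xⱼxⱼᵀ`. Looking for the solution of `G θ = Xᵀy - yᵢxᵢ - yⱼxⱼ` in the form
`θ̂ + a N⁻¹xᵢ + b N⁻¹xⱼ` reduces the problem to the `2 × 2` system with matrix
`[[1 - hᵢᵢ, -hᵢⱼ], [-hᵢⱼ, 1 - hⱼⱼ]]`, whose determinant is `D`; Cramer's rule gives `a` and `b`,
and the effect is `a x_testᵀN⁻¹xᵢ + b x_testᵀN⁻¹xⱼ`. The same ansatz solves `G w = v` for every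
`v`, so `G` is invertible as soon as `D ≠ 0`.
-/

lemma transpose_mul_self_eq_sum_vecMulVec {m n R : Type*} [Fintype m]
    [NonUnitalNonAssocSemiring R] (X : Matrix m n R) :
    Xᵀ * X = ∑ k, vecMulVec (X k) (X k) := by
  ext a b
  simp [mul_apply, vecMulVec_apply, Matrix.sum_apply]

section LeaveOut

variable {n d : ℕ} (X : Matrix (Fin n) (Fin d) ℝ) (y : Fin n → ℝ)

lemma gramOut_eq_sub (S : Finset (Fin n)) :
    gramOut X S = Xᵀ * X - ∑ k ∈ S, vecMulVec (X k) (X k) := by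
  rw [gramOut, transpose_mul_self_eq_sum_vecMulVec, ← sum_compl_add_sum S,
    add_sub_cancel_right]

lemma mulVec_ols (hN : IsUnit (Xᵀ * X).det) : (Xᵀ * X) *ᵥ ols X y = ∑ k, y k • X k := by
  rw [ols, olsOut, gramOut_eq_sub, sum_empty, sub_zero, compl_empty, mulVec_mulVec,
    mul_nonsing_inv _ hN, one_mulVec]

lemma olsOut_eq_of_gramOut_mulVec {S : Finset (Fin n)} {θ : Fin d → ℝ}
    (hS : IsUnit (gramOut X S).det) (hθ : gramOut X S *ᵥ θ = ∑ k ∈ Sᶜ, y k • X k) :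
    olsOut X y S = θ := by
  rw [olsOut, ← hθ, mulVec_mulVec, nonsing_inv_mul _ hS, one_mulVec]

lemma lev_comm (i j : Fin n) : lev X i j = lev X j i := by
  rw [lev, lev, dotProduct_mulVec, ← mulVec_transpose, transpose_nonsing_inv, transpose_mul,
    transpose_transpose, dotProduct_comm]

/-- By Cramer's rule, `a = pairCoef X i j s t` and `b = pairCoef X j i t s` solve
`a (1 - hᵢᵢ) - b hᵢⱼ = s`, `b (1 - hⱼⱼ) - a hᵢⱼ = t`. -/
def pairCoef (i j : Fin n) (s t : ℝ) : ℝ :=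
  ((1 - lev X j j) * s + lev X i j * t) / ((1 - lev X i i) * (1 - lev X j j) - lev X i j ^ 2)

lemma pairCoef_swap (i j : Fin n) (s t : ℝ) :
    pairCoef X j i t s =
      ((1 - lev X i i) * t + lev X i j * s) /
        ((1 - lev X i i) * (1 - lev X j j) - lev X i j ^ 2) := by
  rw [pairCoef, lev_comm X j i, mul_comm (1 - lev X j j)]

variable {X} {i j : Fin n}

lemma gramOut_pair_mulVec (hij : i ≠ j) (w : Fin d → ℝ) :
    gramOut X {i, j} *ᵥ w = (Xᵀ * X) *ᵥ w - (X i ⬝ᵥ w) • X i - (X j ⬝ᵥ w) • X j := by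
  rw [gramOut_eq_sub, sum_pair hij, sub_mulVec, add_mulVec, vecMulVec_mulVec, vecMulVec_mulVec,
    op_smul_eq_smul, op_smul_eq_smul, sub_add_eq_sub_sub]

lemma gramOut_pair_mulVec_add_pairCoef (hN : IsUnit (Xᵀ * X).det) (hij : i ≠ j)
    (hD : (1 - lev X i i) * (1 - lev X j j) - lev X i j ^ 2 ≠ 0) (θ : Fin d → ℝ) (s t : ℝ) :
    gramOut X {i, j} *ᵥ (θ + pairCoef X i j s t • ((Xᵀ * X)⁻¹ *ᵥ X i) +
        pairCoef X j i t s • ((Xᵀ * X)⁻¹ *ᵥ X j)) =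
      (Xᵀ * X) *ᵥ θ - (X i ⬝ᵥ θ - s) • X i - (X j ⬝ᵥ θ - t) • X j := by
  have hs : pairCoef X i j s t * (1 - lev X i i) - pairCoef X j i t s * lev X i j = s := by
    rw [pairCoef_swap X i j, pairCoef, div_mul_eq_mul_div, div_mul_eq_mul_div, ← sub_div,
      div_eq_iff hD]
    ring
  have ht : pairCoef X j i t s * (1 - lev X j j) - pairCoef X i j s t * lev X i j = t := by
    rw [pairCoef_swap X i j, pairCoef, div_mul_eq_mul_div, div_mul_eq_mul_div, ← sub_div,
      div_eq_iff hD]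
    ring
  have hinv : ∀ v, (Xᵀ * X) *ᵥ ((Xᵀ * X)⁻¹ *ᵥ v) = v := fun v => by
    rw [mulVec_mulVec, mul_nonsing_inv _ hN, one_mulVec]
  have hdot : ∀ k (a b : ℝ),
      X k ⬝ᵥ (θ + a • ((Xᵀ * X)⁻¹ *ᵥ X i) + b • ((Xᵀ * X)⁻¹ *ᵥ X j)) =
        X k ⬝ᵥ θ + a * lev X k i + b * lev X k j := fun k a b => by
    simp only [dotProduct_add, dotProduct_smul, smul_eq_mul, lev]
  rw [gramOut_pair_mulVec hij, hdot, hdot, mulVec_add, mulVec_add, mulVec_smul, mulVec_smul,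
    hinv, hinv, lev_comm X j i]
  linear_combination (norm := module) hs • X i + ht • X j

lemma isUnit_det_gramOut_pair (hN : IsUnit (Xᵀ * X).det) (hij : i ≠ j)
    (hD : (1 - lev X i i) * (1 - lev X j j) - lev X i j ^ 2 ≠ 0) :
    IsUnit (gramOut X {i, j}).det := by
  rw [← isUnit_iff_isUnit_det, ← mulVec_surjective_iff_isUnit]
  intro v
  refine ⟨_, (gramOut_pair_mulVec_add_pairCoef hN hij hD ((Xᵀ * X)⁻¹ *ᵥ v)
    (X i ⬝ᵥ ((Xᵀ * X)⁻¹ *ᵥ v)) (X j ⬝ᵥ ((Xᵀ * X)⁻¹ *ᵥ v))).trans ?_⟩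
  rw [sub_self, sub_self, zero_smul, zero_smul, sub_zero, sub_zero, mulVec_mulVec,
    mul_nonsing_inv _ hN, one_mulVec]

lemma olsOut_pair (hN : IsUnit (Xᵀ * X).det) (hij : i ≠ j)
    (hD : (1 - lev X i i) * (1 - lev X j j) - lev X i j ^ 2 ≠ 0) :
    olsOut X y {i, j} =
      ols X y + pairCoef X i j (resid X y i) (resid X y j) • ((Xᵀ * X)⁻¹ *ᵥ X i) +
        pairCoef X j i (resid X y j) (resid X y i) • ((Xᵀ * X)⁻¹ *ᵥ X j) := by
  refine olsOut_eq_of_gramOut_mulVec X y (isUnit_det_gramOut_pair hN hij hD) ?_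
  rw [gramOut_pair_mulVec_add_pairCoef hN hij hD, mulVec_ols X y hN, resid, resid,
    sub_sub_cancel, sub_sub_cancel, ← sum_compl_add_sum {i, j}, sum_pair hij]
  abel

lemma effect_pair_s5 (xt : Fin d → ℝ) (hN : IsUnit (Xᵀ * X).det) (hij : i ≠ j)
    (hD : (1 - lev X i i) * (1 - lev X j j) - lev X i j ^ 2 ≠ 0) :
    effect X y xt {i, j} =
      pairCoef X i j (resid X y i) (resid X y j) * (xt ⬝ᵥ ((Xᵀ * X)⁻¹ *ᵥ X i)) +
        pairCoef X j i (resid X y j) (resid X y i) * (xt ⬝ᵥ ((Xᵀ * X)⁻¹ *ᵥ X j)) := by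
  rw [effect, olsOut_pair y hN hij hD, add_assoc, add_sub_cancel_left, dotProduct_add,
    dotProduct_smul, dotProduct_smul, smul_eq_mul, smul_eq_mul]

end LeaveOut

theorem pairwise_effect_formula_general
    (n d : ℕ)
    (X : Matrix (Fin n) (Fin d) ℝ) (y : Fin n → ℝ) (xt : Fin d → ℝ)
    (i j : Fin n) (hij : i ≠ j)
    (hN : IsUnit (Xᵀ * X).det)
    (hD : (1 - lev X i i) * (1 - lev X j j) - (lev X i j) ^ 2 ≠ 0)
    (hi1 : lev X i i ≠ 1) (hj1 : lev X j j ≠ 1) :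
    effect X y xt {i, j} =
      (xt ⬝ᵥ ((1 - lev X j j) • resid X y i • ((Xᵀ * X)⁻¹ *ᵥ X i) +
        (1 - lev X i i) • resid X y j • ((Xᵀ * X)⁻¹ *ᵥ X j) +
        lev X i j • (resid X y j • ((Xᵀ * X)⁻¹ *ᵥ X i) +
          resid X y i • ((Xᵀ * X)⁻¹ *ᵥ X j)))) /
      ((1 - lev X i i) * (1 - lev X j j) - (lev X i j) ^ 2) ∧
    effect X y xt {i, j} =
      ((1 - lev X i i) * (1 - lev X j j) *
        ((xt ⬝ᵥ ((Xᵀ * X)⁻¹ *ᵥ X i)) * resid X y i / (1 - lev X i i) +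
          (xt ⬝ᵥ ((Xᵀ * X)⁻¹ *ᵥ X j)) * resid X y j / (1 - lev X j j)) +
        lev X i j * (xt ⬝ᵥ (resid X y j • ((Xᵀ * X)⁻¹ *ᵥ X i) +
          resid X y i • ((Xᵀ * X)⁻¹ *ᵥ X j)))) /
      ((1 - lev X i i) * (1 - lev X j j) - (lev X i j) ^ 2) := by
  have h1i : 1 - lev X i i ≠ 0 := sub_ne_zero.mpr hi1.symm
  have h1j : 1 - lev X j j ≠ 0 := sub_ne_zero.mpr hj1.symm
  rw [effect_pair_s5 y xt hN hij hD, pairCoef_swap X i j, pairCoef]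
  simp only [dotProduct_add, dotProduct_smul, smul_eq_mul]
  constructor <;> field_simp <;> ring

/-- Equation (10), pairwise group effect: for distinct `i, j` with
`D = (1-hᵢᵢ)(1-hⱼⱼ) - hᵢⱼ² ≠ 0`, the pairwise actual effect is
`A₋{i,j} = x_testᵀ[(1-hⱼⱼ)N⁻¹xᵢrᵢ + (1-hᵢᵢ)N⁻¹xⱼrⱼ + hᵢⱼN⁻¹(xᵢrⱼ + xⱼrᵢ)]/D`,
and equivalently
`A₋{i,j} = [(1-hᵢᵢ)(1-hⱼⱼ)(A₋{i} + A₋{j}) + hᵢⱼ x_testᵀN⁻¹(xᵢrⱼ + xⱼrᵢ)]/D`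
where `A₋{i} = x_testᵀN⁻¹xᵢrᵢ/(1-hᵢᵢ)`. -/
theorem pairwise_effect_formula
    (n d : ℕ)
    (X : Matrix (Fin n) (Fin d) ℝ) (y : Fin n → ℝ) (xt : Fin d → ℝ)
    (i j : Fin n) (hij : i ≠ j)
    (hN : IsUnit (Xᵀ * X).det)
    (hout : IsUnit (gramOut X {i, j}).det)
    (hD : (1 - lev X i i) * (1 - lev X j j) - (lev X i j) ^ 2 ≠ 0)
    (hi1 : lev X i i ≠ 1) (hj1 : lev X j j ≠ 1) :
    effect X y xt {i, j} =
      (xt ⬝ᵥ ((1 - lev X j j) • resid X y i • ((Xᵀ * X)⁻¹ *ᵥ X i) +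
        (1 - lev X i i) • resid X y j • ((Xᵀ * X)⁻¹ *ᵥ X j) +
        lev X i j • (resid X y j • ((Xᵀ * X)⁻¹ *ᵥ X i) +
          resid X y i • ((Xᵀ * X)⁻¹ *ᵥ X j)))) /
      ((1 - lev X i i) * (1 - lev X j j) - (lev X i j) ^ 2) ∧
    effect X y xt {i, j} =
      ((1 - lev X i i) * (1 - lev X j j) *
        ((xt ⬝ᵥ ((Xᵀ * X)⁻¹ *ᵥ X i)) * resid X y i / (1 - lev X i i) +
          (xt ⬝ᵥ ((Xᵀ * X)⁻¹ *ᵥ X j)) * resid X y j / (1 - lev X j j)) +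
        lev X i j * (xt ⬝ᵥ (resid X y j • ((Xᵀ * X)⁻¹ *ᵥ X i) +
          resid X y i • ((Xᵀ * X)⁻¹ *ᵥ X j)))) /
      ((1 - lev X i i) * (1 - lev X j j) - (lev X i j) ^ 2) :=
  pairwise_effect_formula_general n d X y xt i j hij hN hD hi1 hj1
end
end

section
/- Suppose the training set contains exactly c copies of a sample (x, ỹ), let h = xᵀN⁻¹x and r = xᵀθ̂ − ỹ, and assume 0 < h < min(1, 1/c). For any x_test ∈ ℝ^d, let A_{-{i}} = x_testᵀN⁻¹x·r/(1−h) be the actual effect of removing a single copy and A_{-{i}^c} = c·x_testᵀN⁻¹x·r/(1−c·h) the actual effect of removing all c copies. Then A_{-{i}^c} = [c(1−h)/(1−c·h)]·A_{-{i}}, and if c ≥ 2 then c(1−h)/(1−c·h) > c; in particular, if additionally A_{-{i}} > 0 then A_{-{i}^c} > c·A_{-{i}}. -/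
open Matrix Finset

noncomputable section

lemma mul_div_one_sub_mul_eq (c h a : ℝ) (hh : h ≠ 1) :
    c * a / (1 - c * h) = c * (1 - h) / (1 - c * h) * (a / (1 - h)) := by
  have : 1 - h ≠ 0 := sub_ne_zero.mpr hh.symm
  field_simp

lemma lt_mul_one_sub_div_one_sub_mul {c h : ℝ} (hc : 1 < c) (hh : 0 < h) (hch : c * h < 1) :
    c < c * (1 - h) / (1 - c * h) := by
  rw [lt_div_iff₀ (sub_pos.mpr hch)]
  have : c * h < c * c * h := mul_lt_mul_of_pos_right (lt_mul_self hc) hh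
  linarith

open Classical in
theorem amplification_ratio_general
    (n d c : ℕ)
    (X : Matrix (Fin n) (Fin d) ℝ)
    (x : Fin d → ℝ)
    (h r : ℝ)
    (hpos : 0 < h) (h1 : h < 1) (hinvc : h < 1 / (c : ℝ))
    (xt : Fin d → ℝ) (A Ac : ℝ)
    (hA : A = (xt ⬝ᵥ ((Xᵀ * X)⁻¹ *ᵥ x)) * r / (1 - h))
    (hAc : Ac = (c : ℝ) * (xt ⬝ᵥ ((Xᵀ * X)⁻¹ *ᵥ x)) * r / (1 - (c : ℝ) * h)) :
    Ac = ((c : ℝ) * (1 - h) / (1 - (c : ℝ) * h)) * A ∧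
    (2 ≤ c → (c : ℝ) < (c : ℝ) * (1 - h) / (1 - (c : ℝ) * h)) ∧
    (2 ≤ c → 0 < A → (c : ℝ) * A < Ac) := by
  have hratio : Ac = ((c : ℝ) * (1 - h) / (1 - (c : ℝ) * h)) * A := by
    rw [hA, hAc, mul_assoc, mul_div_one_sub_mul_eq _ _ _ h1.ne]
  have hamp (hc : 2 ≤ c) : (c : ℝ) < (c : ℝ) * (1 - h) / (1 - (c : ℝ) * h) := by
    have hc' : (1 : ℝ) < c := by exact_mod_cast hc
    exact lt_mul_one_sub_div_one_sub_mul hc' hpos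
      ((lt_div_iff₀' (zero_lt_one.trans hc')).mp hinvc)
  exact ⟨hratio, hamp, fun hc hApos => hratio ▸ mul_lt_mul_of_pos_right (hamp hc) hApos⟩

open Classical in
/-- Proposition 3.4, amplification: with exactly `c` copies of the
sample `(x, ỹ)` in the training set, `h = xᵀN⁻¹x`, `r = xᵀθ̂ - ỹ`, `0 < h < min(1, 1/c)`,
and with `A₋{i} = x_testᵀN⁻¹x·r/(1-h)` (effect of removing one copy) and
`A₋{i}ᶜ = c·x_testᵀN⁻¹x·r/(1-c·h)` (effect of removing all `c` copies), we have
`A₋{i}ᶜ = [c(1-h)/(1-c·h)]·A₋{i}`; if `c ≥ 2` then `c(1-h)/(1-c·h) > c`; and in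
particular if additionally `A₋{i} > 0` then `A₋{i}ᶜ > c·A₋{i}`. -/
theorem amplification_ratio
    (n d c : ℕ) (hc : 1 ≤ c)
    (X : Matrix (Fin n) (Fin d) ℝ) (y : Fin n → ℝ)
    (x : Fin d → ℝ) (ytil : ℝ)
    -- the training set contains exactly `c` copies of `(x, ỹ)`
    (hcopies : ({i : Fin n | X i = x ∧ y i = ytil} : Finset (Fin n)).card = c)
    (hN : IsUnit (Xᵀ * X).det)
    (h r : ℝ)
    (hh : h = x ⬝ᵥ ((Xᵀ * X)⁻¹ *ᵥ x))
    (hr : r = x ⬝ᵥ ols X y - ytil)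
    (hpos : 0 < h) (h1 : h < 1) (hinvc : h < 1 / (c : ℝ))
    (xt : Fin d → ℝ) (A Ac : ℝ)
    (hA : A = (xt ⬝ᵥ ((Xᵀ * X)⁻¹ *ᵥ x)) * r / (1 - h))
    (hAc : Ac = (c : ℝ) * (xt ⬝ᵥ ((Xᵀ * X)⁻¹ *ᵥ x)) * r / (1 - (c : ℝ) * h)) :
    Ac = ((c : ℝ) * (1 - h) / (1 - (c : ℝ) * h)) * A ∧
    (2 ≤ c → (c : ℝ) < (c : ℝ) * (1 - h) / (1 - (c : ℝ) * h)) ∧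
    (2 ≤ c → 0 < A → (c : ℝ) * A < Ac) :=
  amplification_ratio_general n d c X x h r hpos h1 hinvc xt A Ac hA hAc
end
end

section
/- Let N ∈ ℝ^{d×d} be positive definite, c > 0, and u, v ∈ ℝ^d such that N − c·u uᵀ − c·v vᵀ is positive definite. Then (1 − c·uᵀN⁻¹u)(1 − c·vᵀN⁻¹v) > c²·(uᵀN⁻¹v)². (In the paper's notation, with c copies of x_1 and x_n in the design and the Gram matrix of the remaining rows positive definite: (1 − c·h_11)(1 − c·h_nn) − c²h_1n² > 0.) -/
/-!
By the matrix determinant lemma for a rank-two update,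
`det (N - c u uᵀ - c v vᵀ) = det N · det (I₂ - c G)`, where `G` is the Gram matrix of `u, v` for
the bilinear form `N⁻¹`. Both `N` and `N - c u uᵀ - c v vᵀ` are positive definite, so their
determinants are positive, hence so is `det (I₂ - c G)`, which expands to the difference of the
two sides of the inequality.
-/

open Matrix

namespace Matrix

theorem dotProduct_mulVec_comm_of_isSymm {m α : Type*} [Fintype m] [CommSemiring α]
    {A : Matrix m m α} (hA : A.IsSymm) (u v : m → α) :
    u ⬝ᵥ A *ᵥ v = v ⬝ᵥ A *ᵥ u := by
  rw [dotProduct_mulVec, ← mulVec_transpose, hA.eq, dotProduct_comm]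

theorem det_add_vecMulVec_add_vecMulVec {m α : Type*} [Fintype m] [DecidableEq m] [CommRing α]
    {A : Matrix m m α} (hA : IsUnit A.det) (u₁ u₂ v₁ v₂ : m → α) :
    (A + vecMulVec u₁ v₁ + vecMulVec u₂ v₂).det =
      A.det * ((1 + v₁ ⬝ᵥ A⁻¹ *ᵥ u₁) * (1 + v₂ ⬝ᵥ A⁻¹ *ᵥ u₂)
        - (v₁ ⬝ᵥ A⁻¹ *ᵥ u₂) * (v₂ ⬝ᵥ A⁻¹ *ᵥ u₁)) := by
  have hUV : vecMulVec u₁ v₁ + vecMulVec u₂ v₂ = (of ![u₁, u₂])ᵀ * of ![v₁, v₂] := by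
    ext i j
    simp [vecMulVec_apply, mul_apply]
  have entry (j k : Fin 2) :
      (of ![v₁, v₂] * A⁻¹ * (of ![u₁, u₂])ᵀ) j k = ![v₁, v₂] j ⬝ᵥ A⁻¹ *ᵥ ![u₁, u₂] k := by
    rw [Matrix.mul_assoc]; rfl
  rw [add_assoc, hUV, det_add_mul _ _ hA, det_fin_two]
  simp only [add_apply, entry]
  simp

end Matrix

theorem schur_leverage_inequality_general
    (d : ℕ) (N : Matrix (Fin d) (Fin d) ℝ) (hN : N.PosDef)
    (c : ℝ) (u v : Fin d → ℝ)
    (hrest : (N - c • vecMulVec u u - c • vecMulVec v v).PosDef) :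
    c ^ 2 * (u ⬝ᵥ (N⁻¹ *ᵥ v)) ^ 2 <
      (1 - c * (u ⬝ᵥ (N⁻¹ *ᵥ u))) * (1 - c * (v ⬝ᵥ (N⁻¹ *ᵥ v))) := by
  have hsymm : v ⬝ᵥ N⁻¹ *ᵥ u = u ⬝ᵥ N⁻¹ *ᵥ v :=
    dotProduct_mulVec_comm_of_isSymm (isHermitian_iff_isSymm.mp hN.isHermitian.inv) v u
  have hdet := det_add_vecMulVec_add_vecMulVec (isUnit_iff_ne_zero.mpr hN.det_pos.ne')
    (-c • u) (-c • v) u v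
  simp only [neg_smul, neg_vecMulVec, smul_vecMulVec, ← sub_eq_add_neg, mulVec_neg, mulVec_smul,
    dotProduct_neg, dotProduct_smul, smul_eq_mul, hsymm] at hdet
  have hgram : 0 < (1 - c * (u ⬝ᵥ N⁻¹ *ᵥ u)) * (1 - c * (v ⬝ᵥ N⁻¹ *ᵥ v))
      - -(c * (u ⬝ᵥ N⁻¹ *ᵥ v)) * -(c * (u ⬝ᵥ N⁻¹ *ᵥ v)) :=
    pos_of_mul_pos_right (hdet ▸ hrest.det_pos) hN.det_pos.le
  linarith

/-- Lemma A.2, second inequality: for `N` positive definite,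
`c > 0` and `u, v` with `N - c·uuᵀ - c·vvᵀ` positive definite,
`(1 - c·uᵀN⁻¹u)(1 - c·vᵀN⁻¹v) > c²·(uᵀN⁻¹v)²`. -/
theorem schur_leverage_inequality
    (d : ℕ) (N : Matrix (Fin d) (Fin d) ℝ) (hN : N.PosDef)
    (c : ℝ) (hc : 0 < c) (u v : Fin d → ℝ)
    (hrest : (N - c • vecMulVec u u - c • vecMulVec v v).PosDef) :
    c ^ 2 * (u ⬝ᵥ (N⁻¹ *ᵥ v)) ^ 2 <
      (1 - c * (u ⬝ᵥ (N⁻¹ *ᵥ u))) * (1 - c * (v ⬝ᵥ (N⁻¹ *ᵥ v))) :=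
  schur_leverage_inequality_general d N hN c u v hrest
end

section
/- Fix S ⊆ {1,…,n} with |S| = k, suppose X_{-S}ᵀX_{-S} is invertible, and suppose the operator norm of M_S = X_S N⁻¹ X_Sᵀ is strictly less than 1. Then the Neumann series Σ_{m=0}^∞ M_S^m converges and the leave-S-out OLS estimator satisfies θ̂_{-S} = θ̂ + N⁻¹X_Sᵀ·(Σ_{m=0}^∞ M_S^m)·(X_S θ̂ − y_S). -/
open Matrix Finset

noncomputable section

-- Equip square matrices with the `L∞` operator norm.
attribute [local instance] Matrix.linftyOpNormedRing Matrix.linftyOpNormedAddCommGroup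

/-- The submatrix `Xₛ ∈ ℝ^{k×d}` stacking the rows of `X` indexed by `S`. -/
def rowsIn {n d : ℕ} (X : Matrix (Fin n) (Fin d) ℝ) (S : Finset (Fin n)) :
    Matrix {i // i ∈ S} (Fin d) ℝ :=
  Matrix.of fun i j => X i.1 j

/-- The subvector `yₛ ∈ ℝ^k` of the entries of `y` indexed by `S`. -/
def entriesIn {n : ℕ} (y : Fin n → ℝ) (S : Finset (Fin n)) : {i // i ∈ S} → ℝ :=
  fun i => y i.1

/-! With `N₋ₛ = N - XₛᵀXₛ` and `T = ∑ Mₛᵐ = (1 - Mₛ)⁻¹`, one checks directly that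
`N₋ₛ (θ̂ + N⁻¹XₛᵀT(Xₛθ̂ - yₛ)) = Xᵀy - Xₛᵀyₛ = X₋ₛᵀy₋ₛ`: the correction term contributes
`Xₛᵀ(1 - Mₛ)T(Xₛθ̂ - yₛ) = Xₛᵀ(Xₛθ̂ - yₛ)`, which cancels `XₛᵀXₛθ̂`. This is the Woodbury identity
applied to the normal equations. -/

instance Matrix.linftyOp_hasSummableGeomSeries {ι α : Type*} [Fintype ι] [DecidableEq ι]
    [NormedRing α] [CompleteSpace α] : HasSummableGeomSeries (Matrix ι ι α) :=
  @instHasSummableGeomSeriesOfCompleteSpace _ _ (inferInstanceAs (CompleteSpace (ι → ι → α)))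

-- `mul_neg_geom_series` sums in the norm topology; this restatement sums in the product topology
-- of `Matrix`, as the theorem does (the two agree only up to unfolding instances).
theorem Matrix.linftyOp_one_sub_mul_tsum_pow {ι α : Type*} [Fintype ι] [DecidableEq ι]
    [NormedRing α] [CompleteSpace α] {M : Matrix ι ι α} (hM : ‖M‖ < 1) :
    (1 - M) * ∑' m : ℕ, M ^ m = 1 :=
  mul_neg_geom_series M hM

theorem Matrix.sub_mul_mulVec_woodbury {d k R : Type*} [Fintype d] [Fintype k] [DecidableEq d]
    [DecidableEq k] [Ring R]
    {N A : Matrix d d R} {U : Matrix d k R} {V : Matrix k d R} {T : Matrix k k R}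
    (hNA : N * A = 1) (hT : (1 - V * A * U) * T = 1) (u : d → R) (v : k → R) :
    (N - U * V) *ᵥ (u + (A * U * T) *ᵥ (V *ᵥ u - v)) = N *ᵥ u - U *ᵥ v := by
  have hcorr : (N - U * V) * (A * U * T) = U :=
    calc (N - U * V) * (A * U * T) = (N * A) * U * T - U * (V * A * U) * T := by
          simp only [Matrix.sub_mul, Matrix.mul_assoc]
      _ = U * ((1 - V * A * U) * T) := by
          rw [hNA, Matrix.one_mul, Matrix.mul_assoc, Matrix.sub_mul, Matrix.one_mul,
            Matrix.mul_sub, Matrix.mul_assoc]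
      _ = U := by rw [hT, Matrix.mul_one]
  rw [mulVec_add, mulVec_mulVec, hcorr, sub_mulVec, ← mulVec_mulVec, mulVec_sub]
  abel

section RowBlocks

variable {n d : ℕ} (X : Matrix (Fin n) (Fin d) ℝ) (S : Finset (Fin n))

theorem transpose_mul_self_eq_sum_vecMulVec_s17 :
    Xᵀ * X = ∑ i, vecMulVec (X i) (X i) := by
  ext a b
  simp [Matrix.sum_apply, Matrix.mul_apply, vecMulVec_apply]

theorem transpose_rowsIn_mul_rowsIn :
    (rowsIn X S)ᵀ * rowsIn X S = ∑ i ∈ S, vecMulVec (X i) (X i) := by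
  ext a b
  simp only [Matrix.mul_apply, Matrix.sum_apply, transpose_apply, rowsIn, of_apply,
    vecMulVec_apply]
  exact Finset.sum_attach S fun i => X i a * X i b

theorem gramOut_eq_sub_s17 : gramOut X S = Xᵀ * X - (rowsIn X S)ᵀ * rowsIn X S := by
  rw [gramOut, transpose_mul_self_eq_sum_vecMulVec_s17, transpose_rowsIn_mul_rowsIn,
    ← Finset.sum_compl_add_sum S, add_sub_cancel_right]

theorem transpose_rowsIn_mulVec_entriesIn (y : Fin n → ℝ) :
    (rowsIn X S)ᵀ *ᵥ entriesIn y S = ∑ i ∈ S, y i • X i := by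
  ext a
  simp only [mulVec, dotProduct, transpose_apply, rowsIn, of_apply, entriesIn,
    Finset.sum_apply, Pi.smul_apply, smul_eq_mul]
  exact (Finset.sum_attach S fun i => X i a * y i).trans
    (Finset.sum_congr rfl fun i _ => mul_comm _ _)

theorem sum_compl_smul_eq_sub (y : Fin n → ℝ) :
    ∑ i ∈ Sᶜ, y i • X i = ∑ i, y i • X i - (rowsIn X S)ᵀ *ᵥ entriesIn y S := by
  rw [transpose_rowsIn_mulVec_entriesIn, ← Finset.sum_compl_add_sum S, add_sub_cancel_right]

theorem gramOut_empty : gramOut X ∅ = Xᵀ * X := by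
  rw [gramOut_eq_sub_s17, transpose_rowsIn_mul_rowsIn, Finset.sum_empty, sub_zero]

theorem transpose_mul_self_mulVec_ols (y : Fin n → ℝ) (hN : IsUnit (Xᵀ * X).det) :
    (Xᵀ * X) *ᵥ ols X y = ∑ i, y i • X i := by
  rw [ols, olsOut, gramOut_empty, mulVec_mulVec, mul_nonsing_inv _ hN, one_mulVec,
    Finset.compl_empty]

end RowBlocks

theorem neumann_series_expansion_general
    (n d : ℕ)
    (X : Matrix (Fin n) (Fin d) ℝ) (y : Fin n → ℝ)
    (S : Finset (Fin n))
    (hN : IsUnit (Xᵀ * X).det)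
    (hout : IsUnit (gramOut X S).det)
    (hnorm : ‖rowsIn X S * (Xᵀ * X)⁻¹ * (rowsIn X S)ᵀ‖ < 1) :
    Summable (fun m : ℕ => (rowsIn X S * (Xᵀ * X)⁻¹ * (rowsIn X S)ᵀ) ^ m) ∧
    olsOut X y S = ols X y +
      ((Xᵀ * X)⁻¹ * (rowsIn X S)ᵀ *
        (∑' m : ℕ, (rowsIn X S * (Xᵀ * X)⁻¹ * (rowsIn X S)ᵀ) ^ m)) *ᵥ
        (rowsIn X S *ᵥ ols X y - entriesIn y S) := by
  refine ⟨summable_geometric_of_norm_lt_one hnorm, ?_⟩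
  have hsolves := sub_mul_mulVec_woodbury (mul_nonsing_inv _ hN)
    (linftyOp_one_sub_mul_tsum_pow hnorm) (ols X y) (entriesIn y S)
  rw [← gramOut_eq_sub_s17, transpose_mul_self_mulVec_ols X y hN, ← sum_compl_smul_eq_sub] at hsolves
  rw [olsOut, ← hsolves, mulVec_mulVec, nonsing_inv_mul _ hout, one_mulVec]

/-- Neumann series expansion, Remark 3.3/Appendix A.4: if the
operator norm of `Mₛ = Xₛ N⁻¹ Xₛᵀ` is `< 1`, the Neumann series `∑ Mₛᵐ` converges and
`θ̂₋ₛ = θ̂ + N⁻¹Xₛᵀ (∑' m, Mₛᵐ) (Xₛθ̂ - yₛ)`. -/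
theorem neumann_series_expansion
    (n d k : ℕ)
    (X : Matrix (Fin n) (Fin d) ℝ) (y : Fin n → ℝ)
    (S : Finset (Fin n)) (hk : S.card = k)
    (hN : IsUnit (Xᵀ * X).det)
    (hout : IsUnit (gramOut X S).det)
    (hnorm : ‖rowsIn X S * (Xᵀ * X)⁻¹ * (rowsIn X S)ᵀ‖ < 1) :
    Summable (fun m : ℕ => (rowsIn X S * (Xᵀ * X)⁻¹ * (rowsIn X S)ᵀ) ^ m) ∧
    olsOut X y S = ols X y +
      ((Xᵀ * X)⁻¹ * (rowsIn X S)ᵀ *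
        (∑' m : ℕ, (rowsIn X S * (Xᵀ * X)⁻¹ * (rowsIn X S)ᵀ) ^ m)) *ᵥ
        (rowsIn X S *ᵥ ols X y - entriesIn y S) :=
  neumann_series_expansion_general n d X y S hN hout hnorm
end
end

section
/- Fix S ⊆ {1,…,n} with |S| = k and define, on the open set of δ ∈ ℝ for which XᵀX − nδ·X_SᵀX_S is invertible, the curve θ(δ) = (XᵀX − nδ·X_SᵀX_S)⁻¹(Xᵀy − nδ·X_Sᵀy_S). Then θ is infinitely differentiable on this set and, for every integer i ≥ 1, its i-th derivative satisfies θ^{(i)}(δ) = n^i·i!·(XᵀX − nδ·X_SᵀX_S)⁻¹X_Sᵀ·[X_S(XᵀX − nδ·X_SᵀX_S)⁻¹X_Sᵀ]^{i−1}·(X_S θ(δ) − y_S). -/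
open Matrix Finset

noncomputable section

private lemma contDiff_finset_prod'' {α : Type*} (s : Finset α) (f : α → ℝ → ℝ)
    (h : ∀ i ∈ s, ContDiff ℝ (⊤ : ℕ∞) (f i)) :
    ContDiff ℝ (⊤ : ℕ∞) (fun t => ∏ i ∈ s, f i t) := by
  induction s using Finset.cons_induction with
  | empty => simpa using contDiff_const
  | cons a s ha ih =>
    simp only [Finset.prod_cons]
    exact (h a (Finset.mem_cons_self a s)).mul (ih fun i hi => h i (Finset.mem_cons_of_mem hi))

private lemma contDiff_det_entries {ι : Type*} [Fintype ι] [DecidableEq ι]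
    {N : ℝ → Matrix ι ι ℝ} (h : ∀ i j, ContDiff ℝ (⊤ : ℕ∞) fun t => N t i j) :
    ContDiff ℝ (⊤ : ℕ∞) fun t => (N t).det := by
  have e : (fun t => (N t).det)
      = fun t => ∑ σ : Equiv.Perm ι, (Equiv.Perm.sign σ : ℝ) * ∏ i, N t (σ i) i := by
    funext t; rw [Matrix.det_apply']
  rw [e]
  exact ContDiff.sum fun σ _ =>
    contDiff_const.mul (contDiff_finset_prod'' _ _ fun i _ => h (σ i) i)

private lemma contDiff_adjugate_entries {ι : Type*} [Fintype ι] [DecidableEq ι]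
    {N : ℝ → Matrix ι ι ℝ} (h : ∀ i j, ContDiff ℝ (⊤ : ℕ∞) fun t => N t i j) (i j : ι) :
    ContDiff ℝ (⊤ : ℕ∞) fun t => (N t).adjugate i j := by
  simp only [Matrix.adjugate_apply]
  refine contDiff_det_entries fun a b => ?_
  simp only [Matrix.updateRow_apply]
  rcases eq_or_ne a j with rfl | hne
  · simp only [if_pos rfl]; exact contDiff_const
  · simp only [if_neg hne]; exact h a b

private lemma hasDerivAt_matrix_mul {α β γ : Type*} [Fintype β]
    {M : ℝ → Matrix α β ℝ} {N : ℝ → Matrix β γ ℝ}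
    {M' : Matrix α β ℝ} {N' : Matrix β γ ℝ} {x : ℝ}
    (hM : ∀ i j, HasDerivAt (fun t => M t i j) (M' i j) x)
    (hN : ∀ i j, HasDerivAt (fun t => N t i j) (N' i j) x)
    (i : α) (j : γ) :
    HasDerivAt (fun t => (M t * N t) i j) ((M' * N x + M x * N') i j) x := by
  have h := HasDerivAt.fun_sum (u := Finset.univ) (fun l _ => (hM i l).mul (hN l j))
  simpa [Matrix.mul_apply, Matrix.add_apply, Finset.sum_add_distrib] using h

private lemma hasDerivAt_mulVec' {α β : Type*} [Fintype β]
    {M : ℝ → Matrix α β ℝ} {v : ℝ → β → ℝ}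
    {M' : Matrix α β ℝ} {v' : β → ℝ} {x : ℝ}
    (hM : ∀ i j, HasDerivAt (fun t => M t i j) (M' i j) x)
    (hv : ∀ j, HasDerivAt (fun t => v t j) (v' j) x) (i : α) :
    HasDerivAt (fun t => (M t *ᵥ v t) i) ((M' *ᵥ v x + M x *ᵥ v') i) x := by
  have h := HasDerivAt.fun_sum (u := Finset.univ) (fun l _ => (hM i l).mul (hv l))
  simpa [Matrix.mulVec, dotProduct, Finset.sum_add_distrib] using h

private theorem aux_upweight {ι κ : Type*} [Fintype ι] [Fintype κ] [DecidableEq ι] [DecidableEq κ]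
    (M : Matrix ι ι ℝ) (L : Matrix κ ι ℝ) (b : ι → ℝ) (z : κ → ℝ) (c : ℝ)
    (A : ℝ → Matrix ι ι ℝ) (hA : A = fun δ => M - (c * δ) • (Lᵀ * L))
    (θ : ℝ → ι → ℝ)
    (hθ : θ = fun δ => (A δ)⁻¹ *ᵥ (b - (c * δ) • (Lᵀ *ᵥ z)))
    (U : Set ℝ) (hU : U = {δ : ℝ | IsUnit (A δ).det}) :
    IsOpen U ∧ ContDiffOn ℝ (⊤ : ℕ∞) θ U ∧
    ∀ δ ∈ U, ∀ i : ℕ, 1 ≤ i →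
      iteratedDerivWithin i θ U δ =
        (c ^ i * (Nat.factorial i : ℝ)) •
          (((A δ)⁻¹ * Lᵀ * (L * (A δ)⁻¹ * Lᵀ) ^ (i - 1)) *ᵥ (L *ᵥ θ δ - z)) := by
  -- `g m δ` is the candidate for the (m+1)-st derivative up to scalar
  set g : ℕ → ℝ → ι → ℝ :=
    fun m t => ((A t)⁻¹ * Lᵀ * (L * (A t)⁻¹ * Lᵀ) ^ m) *ᵥ (L *ᵥ θ t - z) with hgdef
  have hunit : ∀ ⦃δ⦄, δ ∈ U → IsUnit (A δ).det := by
    intro δ hδ; rw [hU] at hδ; exact hδ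
  -- entries of A
  have hAe : ∀ i j, (fun t => A t i j) = fun t => M i j - c * (Lᵀ * L) i j * t := by
    intro i j; funext t
    rw [hA]; simp [Matrix.sub_apply, Matrix.smul_apply]; ring
  have hAder : ∀ (x : ℝ) (i j : ι),
      HasDerivAt (fun t => A t i j) ((-(c • (Lᵀ * L))) i j) x := by
    intro x i j; rw [hAe]
    have := (hasDerivAt_const x (M i j)).fun_sub
      ((hasDerivAt_id x).const_mul (c * (Lᵀ * L) i j))
    simpa [Matrix.neg_apply, Matrix.smul_apply] using this
  have hAcd : ∀ i j, ContDiff ℝ (⊤ : ℕ∞) fun t => A t i j := by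
    intro i j; rw [hAe]
    exact contDiff_const.sub (contDiff_const.mul contDiff_id)
  have hdet : ContDiff ℝ (⊤ : ℕ∞) fun t => (A t).det := contDiff_det_entries hAcd
  have hopen : IsOpen U := by
    have : U = (fun t => (A t).det) ⁻¹' ({0}ᶜ) := by
      rw [hU]; ext t; simp [isUnit_iff_ne_zero]
    rw [this]
    exact isOpen_compl_singleton.preimage hdet.continuous
  have hdetne : ∀ ⦃δ⦄, δ ∈ U → (A δ).det ≠ 0 := fun δ hδ => (hunit hδ).ne_zero
  have hinv_eq : ∀ i j, (fun t => (A t)⁻¹ i j)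
      = fun t => ((A t).det)⁻¹ * (A t).adjugate i j := by
    intro i j; funext t
    rw [Matrix.inv_def]
    simp [Ring.inverse_eq_inv', Matrix.smul_apply]
  have hEcd : ∀ i j, ContDiffOn ℝ (⊤ : ℕ∞) (fun t => (A t)⁻¹ i j) U := by
    intro i j; rw [hinv_eq]
    exact (hdet.contDiffOn.inv hdetne).mul (contDiff_adjugate_entries hAcd i j).contDiffOn
  -- smoothness of θ
  have hθcd : ContDiffOn ℝ (⊤ : ℕ∞) θ U := by
    rw [contDiffOn_pi]; intro j
    have he : ∀ t, θ t j = ∑ l, (A t)⁻¹ j l * (b l - c * (Lᵀ *ᵥ z) l * t) := by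
      intro t; rw [hθ]
      simp only [Matrix.mulVec, dotProduct, Pi.sub_apply, Pi.smul_apply, smul_eq_mul]
      exact Finset.sum_congr rfl fun l _ => by ring
    refine ContDiffOn.congr (ContDiffOn.sum fun l _ => (hEcd j l).mul ?_) fun t _ => he t
    exact (contDiff_const.sub (contDiff_const.mul contDiff_id)).contDiffOn
  -- derivative of the inverse entries
  have hEder : ∀ ⦃δ⦄, δ ∈ U → ∀ i j, HasDerivAt (fun t => (A t)⁻¹ i j)
      ((c • ((A δ)⁻¹ * (Lᵀ * L) * (A δ)⁻¹)) i j) δ := by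
    intro δ hδ
    have hdiff : ∀ i j, DifferentiableAt ℝ (fun t => (A t)⁻¹ i j) δ := fun i j =>
      ((hEcd i j).differentiableOn (by simp)).differentiableAt (hopen.mem_nhds hδ)
    set D : Matrix ι ι ℝ := Matrix.of fun i j => deriv (fun t => (A t)⁻¹ i j) δ with hD
    have hDder : ∀ i j, HasDerivAt (fun t => (A t)⁻¹ i j) (D i j) δ := fun i j =>
      (hdiff i j).hasDerivAt
    have hder0 : ∀ i j, HasDerivAt (fun t => (A t * (A t)⁻¹) i j)
        (((-(c • (Lᵀ * L))) * (A δ)⁻¹ + A δ * D) i j) δ :=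
      fun i j => hasDerivAt_matrix_mul (fun i j => hAder δ i j) hDder i j
    have hzero : ∀ i j, ((-(c • (Lᵀ * L))) * (A δ)⁻¹ + A δ * D) i j = 0 := by
      intro i j
      have hev : (fun t => (A t * (A t)⁻¹) i j) =ᶠ[nhds δ] fun _ => (1 : Matrix ι ι ℝ) i j := by
        filter_upwards [hopen.mem_nhds hδ] with t ht
        rw [Matrix.mul_nonsing_inv _ (hunit ht)]
      have h1 : HasDerivAt (fun t => (A t * (A t)⁻¹) i j) 0 δ :=
        (hasDerivAt_const δ _).congr_of_eventuallyEq hev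
      exact (hder0 i j).unique h1
    have hmat : (-(c • (Lᵀ * L))) * (A δ)⁻¹ + A δ * D = 0 := by
      ext i j; simpa using hzero i j
    have hAD : (c • (Lᵀ * L)) * (A δ)⁻¹ = A δ * D := by
      rwa [Matrix.neg_mul, neg_add_eq_zero] at hmat
    have hDval : D = c • ((A δ)⁻¹ * (Lᵀ * L) * (A δ)⁻¹) := by
      calc D = ((A δ)⁻¹ * A δ) * D := by
              rw [Matrix.nonsing_inv_mul _ (hunit hδ), Matrix.one_mul]
        _ = (A δ)⁻¹ * (A δ * D) := by rw [Matrix.mul_assoc]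
        _ = (A δ)⁻¹ * ((c • (Lᵀ * L)) * (A δ)⁻¹) := by rw [hAD]
        _ = c • ((A δ)⁻¹ * (Lᵀ * L) * (A δ)⁻¹) := by
              simp [Matrix.mul_smul, Matrix.smul_mul, Matrix.mul_assoc]
    intro i j; rw [← hDval]; exact hDder i j
  -- derivative of K = L * A⁻¹ * Lᵀ
  have hLconst : ∀ (x : ℝ) (i : κ) (j : ι),
      HasDerivAt (fun _ : ℝ => L i j) ((0 : Matrix κ ι ℝ) i j) x := by
    intro x i j; simpa using hasDerivAt_const x (L i j)
  have hLtconst : ∀ (x : ℝ) (i : ι) (j : κ),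
      HasDerivAt (fun _ : ℝ => Lᵀ i j) ((0 : Matrix ι κ ℝ) i j) x := by
    intro x i j; simpa using hasDerivAt_const x (Lᵀ i j)
  have hKder : ∀ ⦃δ⦄, δ ∈ U → ∀ i j, HasDerivAt (fun t => (L * (A t)⁻¹ * Lᵀ) i j)
      ((c • ((L * (A δ)⁻¹ * Lᵀ) * (L * (A δ)⁻¹ * Lᵀ))) i j) δ := by
    intro δ hδ i j
    have h1 := hasDerivAt_matrix_mul
      (hasDerivAt_matrix_mul (hLconst δ) (hEder hδ)) (hLtconst δ) i j
    have hm : ((0 : Matrix κ ι ℝ) * (A δ)⁻¹ + L * (c • ((A δ)⁻¹ * (Lᵀ * L) * (A δ)⁻¹))) * Lᵀ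
          + L * (A δ)⁻¹ * (0 : Matrix ι κ ℝ)
        = c • ((L * (A δ)⁻¹ * Lᵀ) * (L * (A δ)⁻¹ * Lᵀ)) := by
      simp [Matrix.mul_smul, Matrix.smul_mul, Matrix.mul_assoc]
    rw [hm] at h1; exact h1
  have hKpow : ∀ ⦃δ⦄, δ ∈ U → ∀ (m : ℕ) (i j : κ),
      HasDerivAt (fun t => ((L * (A t)⁻¹ * Lᵀ) ^ m) i j)
        (((((m : ℝ) * c) • ((L * (A δ)⁻¹ * Lᵀ) ^ (m + 1)))) i j) δ := by
    intro δ hδ m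
    induction m with
    | zero =>
      intro i j
      simp only [pow_zero, Nat.cast_zero, zero_mul, zero_smul, Matrix.zero_apply]
      exact hasDerivAt_const δ _
    | succ m ih =>
      intro i j
      have h1 := hasDerivAt_matrix_mul ih (hKder hδ) i j
      have hm : (((m : ℝ) * c) • ((L * (A δ)⁻¹ * Lᵀ) ^ (m + 1))) * (L * (A δ)⁻¹ * Lᵀ)
            + (L * (A δ)⁻¹ * Lᵀ) ^ m * (c • ((L * (A δ)⁻¹ * Lᵀ) * (L * (A δ)⁻¹ * Lᵀ)))
          = ((((m : ℕ) + 1 : ℕ) : ℝ) * c) • ((L * (A δ)⁻¹ * Lᵀ) ^ (m + 1 + 1)) := by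
        push_cast
        rw [add_mul, one_mul, add_smul]
        congr 1
        · rw [Matrix.smul_mul, ← pow_succ]
        · rw [Matrix.mul_smul, ← Matrix.mul_assoc, ← pow_succ, ← pow_succ]
      rw [hm] at h1
      have hpw : (fun t => ((L * (A t)⁻¹ * Lᵀ) ^ (m + 1)) i j)
          = fun t => ((L * (A t)⁻¹ * Lᵀ) ^ m * (L * (A t)⁻¹ * Lᵀ)) i j := by
        funext t; rw [pow_succ]
      rw [hpw]; exact h1
  -- derivative of θ
  have hvder : ∀ (x : ℝ) (l : ι),
      HasDerivAt (fun t => (b - (c * t) • (Lᵀ *ᵥ z)) l) (((-c) • (Lᵀ *ᵥ z)) l) x := by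
    intro x l
    have he : (fun t => (b - (c * t) • (Lᵀ *ᵥ z)) l)
        = fun t => b l - c * (Lᵀ *ᵥ z) l * t := by
      funext t; simp [Pi.sub_apply, Pi.smul_apply]; ring
    rw [he]
    have := (hasDerivAt_const x (b l)).fun_sub
      ((hasDerivAt_id x).const_mul (c * (Lᵀ *ᵥ z) l))
    simpa [Pi.smul_apply] using this
  have hθδ : ∀ t, θ t = (A t)⁻¹ *ᵥ (b - (c * t) • (Lᵀ *ᵥ z)) := fun t => by rw [hθ]
  have hθder : ∀ ⦃δ⦄, δ ∈ U → ∀ j, HasDerivAt (fun t => θ t j) ((c • g 0 δ) j) δ := by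
    intro δ hδ j
    have h1 := hasDerivAt_mulVec' (hEder hδ) (hvder (x := δ)) j
    have hval : (c • ((A δ)⁻¹ * (Lᵀ * L) * (A δ)⁻¹)) *ᵥ (b - (c * δ) • (Lᵀ *ᵥ z))
          + (A δ)⁻¹ *ᵥ ((-c) • (Lᵀ *ᵥ z)) = c • g 0 δ := by
      rw [hgdef]
      simp only [pow_zero, Matrix.mul_one, Matrix.smul_mulVec, Matrix.mulVec_smul,
        Matrix.mulVec_sub, ← Matrix.mulVec_mulVec, Matrix.mul_assoc, hθδ]
      module
    rw [← hval]
    have he : (fun t => θ t j) = fun t => ((A t)⁻¹ *ᵥ (b - (c * t) • (Lᵀ *ᵥ z))) j := by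
      funext t; rw [hθδ t]
    rw [he]; exact h1
  -- derivative of the residual r = L θ - z
  have hrder : ∀ ⦃δ⦄, δ ∈ U → ∀ l, HasDerivAt (fun t => (L *ᵥ θ t - z) l)
      ((c • ((L * (A δ)⁻¹ * Lᵀ) *ᵥ (L *ᵥ θ δ - z))) l) δ := by
    intro δ hδ l
    have h1 := hasDerivAt_mulVec' (M := fun _ : ℝ => L) (hLconst δ) (hθder hδ) l
    have h2 := h1.sub_const (z l)
    have hval : (0 : Matrix κ ι ℝ) *ᵥ θ δ + L *ᵥ (c • g 0 δ)
        = c • ((L * (A δ)⁻¹ * Lᵀ) *ᵥ (L *ᵥ θ δ - z)) := by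
      rw [hgdef]
      simp only [pow_zero, Matrix.mul_one, Matrix.zero_mulVec, zero_add,
        Matrix.mulVec_smul, Matrix.mulVec_mulVec, Matrix.mul_assoc]
    rw [hval] at h2
    exact h2
  -- derivative of g m
  have hgder : ∀ ⦃δ⦄, δ ∈ U → ∀ (m : ℕ) (j : ι), HasDerivAt (fun t => g m t j)
      (((((m : ℝ) + 2) * c) • g (m + 1) δ) j) δ := by
    intro δ hδ m j
    have hMder : ∀ i j, HasDerivAt (fun t => ((A t)⁻¹ * Lᵀ * (L * (A t)⁻¹ * Lᵀ) ^ m) i j)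
        ((((c • ((A δ)⁻¹ * (Lᵀ * L) * (A δ)⁻¹)) * Lᵀ + (A δ)⁻¹ * (0 : Matrix ι κ ℝ)) * ((L * (A δ)⁻¹ * Lᵀ) ^ m)
          + ((A δ)⁻¹ * Lᵀ) * (((m : ℝ) * c) • (L * (A δ)⁻¹ * Lᵀ) ^ (m + 1))) i j) δ :=
      fun i j => hasDerivAt_matrix_mul
        (hasDerivAt_matrix_mul (hEder hδ) (hLtconst δ)) (hKpow hδ m) i j
    have h1 := hasDerivAt_mulVec' hMder (hrder hδ) j
    have k1 : (A δ)⁻¹ * (Lᵀ * L) * (A δ)⁻¹ * Lᵀ * (L * (A δ)⁻¹ * Lᵀ) ^ m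
        = (A δ)⁻¹ * Lᵀ * (L * (A δ)⁻¹ * Lᵀ) ^ (m + 1) := by
      rw [pow_succ']; simp only [Matrix.mul_assoc]
    have k2 : (A δ)⁻¹ * Lᵀ * (L * (A δ)⁻¹ * Lᵀ) ^ m * (L * (A δ)⁻¹ * Lᵀ)
        = (A δ)⁻¹ * Lᵀ * (L * (A δ)⁻¹ * Lᵀ) ^ (m + 1) := by
      rw [pow_succ]; simp only [Matrix.mul_assoc]
    have hval : (((c • ((A δ)⁻¹ * (Lᵀ * L) * (A δ)⁻¹)) * Lᵀ + (A δ)⁻¹ * (0 : Matrix ι κ ℝ))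
            * ((L * (A δ)⁻¹ * Lᵀ) ^ m)
          + ((A δ)⁻¹ * Lᵀ) * (((m : ℝ) * c) • (L * (A δ)⁻¹ * Lᵀ) ^ (m + 1))) *ᵥ (L *ᵥ θ δ - z)
          + ((A δ)⁻¹ * Lᵀ * (L * (A δ)⁻¹ * Lᵀ) ^ m)
            *ᵥ (c • ((L * (A δ)⁻¹ * Lᵀ) *ᵥ (L *ᵥ θ δ - z)))
        = (((m : ℝ) + 2) * c) •
            (((A δ)⁻¹ * Lᵀ * (L * (A δ)⁻¹ * Lᵀ) ^ (m + 1)) *ᵥ (L *ᵥ θ δ - z)) := by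
      rw [Matrix.mul_zero, add_zero, Matrix.smul_mul, Matrix.smul_mul, k1,
        Matrix.mul_smul, Matrix.mulVec_smul, Matrix.mulVec_mulVec, k2,
        Matrix.add_mulVec, Matrix.smul_mulVec, Matrix.smul_mulVec]
      module
    rw [hval] at h1
    simp only [hgdef]
    exact h1
  -- the main induction
  have hmain : ∀ i : ℕ, 1 ≤ i → ∀ δ ∈ U, iteratedDerivWithin i θ U δ
      = (c ^ i * (Nat.factorial i : ℝ)) • g (i - 1) δ := by
    intro i hi
    induction i, hi using Nat.le_induction with
    | base =>
      intro δ hδ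
      rw [iteratedDerivWithin_one,
        derivWithin_of_isOpen hopen hδ,
        (hasDerivAt_pi.2 (hθder hδ)).deriv]
      norm_num
    | succ i hi ih =>
      intro δ hδ
      rw [iteratedDerivWithin_succ,
        derivWithin_of_isOpen hopen hδ]
      have hev : iteratedDerivWithin i θ U =ᶠ[nhds δ]
          fun t => (c ^ i * (Nat.factorial i : ℝ)) • g (i - 1) t := by
        filter_upwards [hopen.mem_nhds hδ] with t ht
        exact ih t ht
      rw [hev.deriv_eq]
      have hd : HasDerivAt (fun t => (c ^ i * (Nat.factorial i : ℝ)) • g (i - 1) t)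
          ((c ^ i * (Nat.factorial i : ℝ)) •
            (((((i - 1 : ℕ) : ℝ) + 2) * c) • g (i - 1 + 1) δ)) δ :=
        (hasDerivAt_pi.2 (hgder hδ (i - 1))).fun_const_smul _
      rw [hd.deriv, Nat.sub_add_cancel hi, Nat.add_sub_cancel, smul_smul]
      congr 1
      rw [Nat.cast_sub hi, Nat.factorial_succ]
      push_cast
      ring
  refine ⟨hopen, hθcd, fun δ hδ i hi => ?_⟩
  rw [hmain i hi δ hδ, hgdef]

/-- Taylor series of the upweighted estimator, Appendix A.4: on
the open set `U` of `δ` for which `XᵀX - nδ·XₛᵀXₛ` is invertible, the curve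
`θ(δ) = (XᵀX - nδ·XₛᵀXₛ)⁻¹(Xᵀy - nδ·Xₛᵀyₛ)` is `C^∞`, and for every `i ≥ 1` its
`i`-th derivative equals
`nⁱ·i!·(XᵀX - nδXₛᵀXₛ)⁻¹Xₛᵀ·[Xₛ(XᵀX - nδXₛᵀXₛ)⁻¹Xₛᵀ]^{i-1}·(Xₛθ(δ) - yₛ)`. -/
theorem upweighted_estimator_derivatives
    (n d k : ℕ)
    (X : Matrix (Fin n) (Fin d) ℝ) (y : Fin n → ℝ)
    (S : Finset (Fin n)) (hk : S.card = k)
    (A : ℝ → Matrix (Fin d) (Fin d) ℝ)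
    (hA : A = fun δ => Xᵀ * X - ((n : ℝ) * δ) • ((rowsIn X S)ᵀ * rowsIn X S))
    (θ : ℝ → Fin d → ℝ)
    (hθ : θ = fun δ => (A δ)⁻¹ *ᵥ (Xᵀ *ᵥ y - ((n : ℝ) * δ) • ((rowsIn X S)ᵀ *ᵥ entriesIn y S)))
    (U : Set ℝ) (hU : U = {δ : ℝ | IsUnit (A δ).det}) :
    IsOpen U ∧ ContDiffOn ℝ (⊤ : ℕ∞) θ U ∧
    ∀ δ ∈ U, ∀ i : ℕ, 1 ≤ i →
      iteratedDerivWithin i θ U δ =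
        ((n : ℝ) ^ i * (Nat.factorial i : ℝ)) •
          (((A δ)⁻¹ * (rowsIn X S)ᵀ *
            (rowsIn X S * (A δ)⁻¹ * (rowsIn X S)ᵀ) ^ (i - 1)) *ᵥ
            (rowsIn X S *ᵥ θ δ - entriesIn y S)) := by
  exact aux_upweight (Xᵀ * X) (rowsIn X S) (Xᵀ *ᵥ y) (entriesIn y S) (n : ℝ) A hA θ hθ U hU
end
end
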